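/- arXiv:1706.04558 — 11 statements merged into one kernel-verified Lean document; each statement's English description precedes it below -/
import Mathlib

section
/- Let G be a finite simple graph with vertex set {1,...,n}. Let D^r be the orientation directing every edge from its smaller endpoint to its larger endpoint, and D^l the orientation directing every edge from larger to smaller. Then for every orientation D of G, the out-degree vector of D^l is dominated by the out-degree vector of D, which is dominated by the out-degree vector of D^r, where vector s is dominated by t iff all partial sums satisfy ∑_{i≤k} s_i ≤ ∑_{i≤k} t_i for all k, with equality at k = n. -/
/-- `D` is an orientation of `G`: each edge gets exactly one direction. -/
def IsOrientation {n : ℕ} (G : SimpleGraph (Fin n)) (D : Fin n → Fin n → Bool) : Prop :=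
  ∀ u v : Fin n, (G.Adj u v → D u v = !D v u) ∧ (¬ G.Adj u v → D u v = false)

/-- Out-degree of `v` in the orientation `D`. -/
def outDeg {n : ℕ} (D : Fin n → Fin n → Bool) (v : Fin n) : ℕ :=
  (Finset.univ.filter (fun w => D v w = true)).card

/-- Partial sum of the first `k` entries of a vector indexed by `Fin n`. -/
def partialSum {n : ℕ} (s : Fin n → ℕ) (k : ℕ) : ℕ :=
  ∑ i ∈ Finset.univ.filter (fun i : Fin n => i.val < k), s i

/-- The dominance order `s ≼ t`. -/
def Preceq {n : ℕ} (s t : Fin n → ℕ) : Prop :=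
  (∀ k : ℕ, k ≤ n → partialSum s k ≤ partialSum t k) ∧ partialSum s n = partialSum t n


/-!
The `k`-th partial sum of an out-degree vector counts the arcs whose tail lies among the first
`k` vertices. Reorienting the arcs of `D` as in another orientation `E` of the same graph is
injective, since an orientation never contains an arc together with its reverse; when every
edge on which `E` and `D` disagree has its `E`-tail below `k` as soon as its `D`-tail is, it
maps these arcs of `D` into those of `E`. Going from the leftward orientation to `D`, or from
`D` to the rightward one, only ever moves tails down, and for `k = n` the condition is empty in
both directions, which gives equality of the totals.
-/

variable {n : ℕ}

namespace IsOrientation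

variable {G : SimpleGraph (Fin n)} {D : Fin n → Fin n → Bool} {u v : Fin n}

theorem adj_of_eq_true (hD : IsOrientation G D) (h : D u v = true) : G.Adj u v := by
  by_contra hadj
  simp [(hD u v).2 hadj] at h

theorem eq_false_of_eq_true (hD : IsOrientation G D) (h : D u v = true) : D v u = false := by
  simpa [h] using (hD v u).1 (hD.adj_of_eq_true h).symm

theorem eq_true_of_eq_false (hD : IsOrientation G D) (hadj : G.Adj u v) (h : D u v = false) :
    D v u = true := by
  simpa [h] using (hD u v).1 hadj

end IsOrientation

theorem isOrientation_decide_adj_and {G : SimpleGraph (Fin n)} [DecidableRel G.Adj]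
    {r : Fin n → Fin n → Prop} [DecidableRel r] (hr : ∀ u v, u ≠ v → (r u v ↔ ¬ r v u)) :
    IsOrientation G (fun u v => decide (G.Adj u v ∧ r u v)) := by
  intro u v
  refine ⟨fun hadj => ?_, fun hadj => by simp [hadj]⟩
  simp [hadj, hadj.symm, hr u v hadj.ne]

def arcsFrom (D : Fin n → Fin n → Bool) (k : ℕ) : Finset (Fin n × Fin n) :=
  Finset.univ.filter fun p => p.1.val < k ∧ D p.1 p.2 = true

theorem partialSum_outDeg_eq_card_arcsFrom (D : Fin n → Fin n → Bool) (k : ℕ) :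
    partialSum (outDeg D) k = (arcsFrom D k).card := by
  rw [partialSum, Finset.sum_filter, arcsFrom, Finset.card_filter,
    ← Finset.univ_product_univ, Finset.sum_product]
  refine Finset.sum_congr rfl fun v _ => ?_
  by_cases h : v.val < k
  · rw [if_pos h, outDeg, Finset.card_filter]
    exact Finset.sum_congr rfl fun w _ => by simp [h]
  · simp [h]

theorem partialSum_outDeg_le {G : SimpleGraph (Fin n)} {D E : Fin n → Fin n → Bool}
    (hD : IsOrientation G D) (hE : IsOrientation G E) (k : ℕ)
    (htail : ∀ u v, D u v = true → E v u = true → u.val < k → v.val < k) :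
    partialSum (outDeg D) k ≤ partialSum (outDeg E) k := by
  simp only [partialSum_outDeg_eq_card_arcsFrom]
  let reorient : Fin n × Fin n → Fin n × Fin n := fun p => if E p.1 p.2 then p else p.swap
  refine Finset.card_le_card_of_injOn reorient (fun p hp => ?_) (fun p hp q hq hpq => ?_)
  · simp only [Finset.mem_coe, arcsFrom, Finset.mem_filter, Finset.mem_univ, true_and] at hp ⊢
    obtain ⟨hk, hDp⟩ := hp
    cases hEp : E p.1 p.2
    · have hEq := hE.eq_true_of_eq_false (hD.adj_of_eq_true hDp) hEp
      simp only [reorient, hEp, Bool.false_eq_true, if_false, Prod.fst_swap, Prod.snd_swap]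
      exact ⟨htail _ _ hDp hEq hk, hEq⟩
    · simpa [reorient, hEp] using hk
  · simp only [Finset.mem_coe, arcsFrom, Finset.mem_filter] at hp hq
    have hp_swap := hD.eq_false_of_eq_true hp.2.2
    have hq_swap := hD.eq_false_of_eq_true hq.2.2
    simp only [reorient] at hpq
    split_ifs at hpq <;> simp_all [Prod.ext_iff]

theorem partialSum_outDeg_eq_of_isOrientation {G : SimpleGraph (Fin n)}
    {D E : Fin n → Fin n → Bool} (hD : IsOrientation G D) (hE : IsOrientation G E) :
    partialSum (outDeg D) n = partialSum (outDeg E) n :=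
  le_antisymm (partialSum_outDeg_le hD hE n fun _ v _ _ _ => v.isLt)
    (partialSum_outDeg_le hE hD n fun _ v _ _ _ => v.isLt)

/-- the out-degree vector of the all-leftward orientation is dominated by
the out-degree vector of any orientation `D`, which in turn is dominated by the
out-degree vector of the all-rightward orientation. -/
theorem outDeg_left_preceq_preceq_right {n : ℕ} (G : SimpleGraph (Fin n))
    [DecidableRel G.Adj] (D : Fin n → Fin n → Bool) (hD : IsOrientation G D) :
    Preceq (outDeg (fun u v => decide (G.Adj u v ∧ v < u))) (outDeg D) ∧
    Preceq (outDeg D) (outDeg (fun u v => decide (G.Adj u v ∧ u < v))) := by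
  have hleft : IsOrientation G (fun u v => decide (G.Adj u v ∧ v < u)) :=
    isOrientation_decide_adj_and fun u v huv => by omega
  have hright : IsOrientation G (fun u v => decide (G.Adj u v ∧ u < v)) :=
    isOrientation_decide_adj_and fun u v huv => by omega
  exact ⟨⟨fun k _ => partialSum_outDeg_le hleft hD k
        fun u v h _ hu => (Fin.lt_def.1 (of_decide_eq_true h).2).trans hu,
      partialSum_outDeg_eq_of_isOrientation hleft hD⟩,
    ⟨fun k _ => partialSum_outDeg_le hD hright k
        fun u v _ h hu => (Fin.lt_def.1 (of_decide_eq_true h).2).trans hu,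
      partialSum_outDeg_eq_of_isOrientation hD hright⟩⟩
end

section
/- Let T1 be the tree on 7 vertices consisting of a central vertex of degree 3 each of whose three neighbors has exactly one additional neighbor of degree 1 (the spider S(2,2,2)). Then for every bijective labeling f : V(T1) → {1,...,7}, there exist labels k1 < k2 < k3 < k4 such that either both {k1,k3} and {k2,k4} are edges of the labeled graph, or both {k1,k4} and {k2,k3} are edges. -/
/-!
Read each labeled edge as the interval between its two labels. Avoiding `H1` and `H2` means that
whenever a label lies strictly inside the interval of an edge, every neighbour of that vertex is an
endpoint of the edge. In `T1`, one of `a1, a2, a3`, say `aj`, has its label between the other two,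
so whichever side of it the centre `c` lies on, the edge from `c` to the opposite `ai` spans `aj`,
while `aj`'s other neighbour `bj` is not an endpoint of that edge.
-/

/-- The spider `T1 = S(2,2,2)`: center `0` adjacent to `1,2,3`, legs `1-4`, `2-5`, `3-6`. -/
def spiderT1 : SimpleGraph (Fin 7) :=
  SimpleGraph.fromEdgeSet {s(0, 1), s(0, 2), s(0, 3), s(1, 4), s(2, 5), s(3, 6)}

namespace SimpleGraph

variable {V α : Type*} [LinearOrder α] (G : SimpleGraph V) (ℓ : V → α)

/-- Two edges crossing (`H1`) or nested (`H2`) in the vertex order given by the labeling `ℓ`. -/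
def HasCrossingOrNesting : Prop :=
  ∃ u₁ u₂ u₃ u₄ : V, ℓ u₁ < ℓ u₂ ∧ ℓ u₂ < ℓ u₃ ∧ ℓ u₃ < ℓ u₄ ∧
    (G.Adj u₁ u₃ ∧ G.Adj u₂ u₄ ∨ G.Adj u₁ u₄ ∧ G.Adj u₂ u₃)

variable {G ℓ}

theorem hasCrossingOrNesting_of_lt_of_lt (hℓ : Function.Injective ℓ) {u v x y : V}
    (huv : G.Adj u v) (hxy : G.Adj x y) (hux : ℓ u < ℓ x) (hxv : ℓ x < ℓ v)
    (hyu : y ≠ u) (hyv : y ≠ v) : G.HasCrossingOrNesting ℓ := by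
  have hyx : ℓ y ≠ ℓ x := hℓ.ne hxy.ne'
  rcases (hℓ.ne hyu).lt_or_gt with hy | hy
  · exact ⟨y, u, x, v, hy, hux, hxv, .inl ⟨hxy.symm, huv⟩⟩
  rcases (hℓ.ne hyv).lt_or_gt with hy' | hy'
  · rcases hyx.lt_or_gt with hyx | hyx
    · exact ⟨u, y, x, v, hy, hyx, hxv, .inr ⟨huv, hxy.symm⟩⟩
    · exact ⟨u, x, y, v, hux, hyx, hy', .inr ⟨huv, hxy⟩⟩
  · exact ⟨u, x, v, y, hux, hxv, hy', .inl ⟨huv, hxy⟩⟩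

theorem hasCrossingOrNesting_of_lt_of_lt_of_adj (hℓ : Function.Injective ℓ)
    {c a₁ a₂ a₃ b₂ : V} (h₁ : ℓ a₁ < ℓ a₂) (h₃ : ℓ a₂ < ℓ a₃)
    (hca₁ : G.Adj c a₁) (hca₃ : G.Adj c a₃) (hab₂ : G.Adj a₂ b₂) (hca₂ : c ≠ a₂)
    (hbc : b₂ ≠ c) (hba₁ : b₂ ≠ a₁) (hba₃ : b₂ ≠ a₃) : G.HasCrossingOrNesting ℓ := by
  rcases (hℓ.ne hca₂).lt_or_gt with hc | hc
  · exact hasCrossingOrNesting_of_lt_of_lt hℓ hca₃ hab₂ hc h₃ hbc hba₃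
  · exact hasCrossingOrNesting_of_lt_of_lt hℓ hca₁.symm hab₂ h₁ hc hba₁ hbc

theorem exists_lt_lt_of_injective {g : Fin 3 → α}
    (hg : Function.Injective g) : ∃ i j k, g i < g j ∧ g j < g k := by
  rcases (hg.ne (by decide : (0 : Fin 3) ≠ 1)).lt_or_gt with h₀₁ | h₀₁ <;>
  rcases (hg.ne (by decide : (0 : Fin 3) ≠ 2)).lt_or_gt with h₀₂ | h₀₂ <;>
  rcases (hg.ne (by decide : (1 : Fin 3) ≠ 2)).lt_or_gt with h₁₂ | h₁₂ <;>
  first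
  | exact ⟨0, 1, 2, h₀₁, h₁₂⟩ | exact ⟨0, 2, 1, h₀₂, h₁₂⟩ | exact ⟨1, 0, 2, h₀₁, h₀₂⟩
  | exact ⟨1, 2, 0, h₁₂, h₀₂⟩ | exact ⟨2, 0, 1, h₀₂, h₀₁⟩ | exact ⟨2, 1, 0, h₁₂, h₀₁⟩

/-- `c`, `a`, `b` span a (not necessarily induced) copy of `S(2,2,2)`. -/
theorem hasCrossingOrNesting_of_spider (hℓ : Function.Injective ℓ) {c : V} {a b : Fin 3 → V}
    (ha : Function.Injective a) (hca : ∀ i, G.Adj c (a i)) (hab : ∀ i, G.Adj (a i) (b i))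
    (hbc : ∀ i, b i ≠ c) (hba : ∀ i j, i ≠ j → b i ≠ a j) : G.HasCrossingOrNesting ℓ := by
  obtain ⟨i, j, k, hij, hjk⟩ := exists_lt_lt_of_injective (hℓ.comp ha)
  exact hasCrossingOrNesting_of_lt_of_lt_of_adj hℓ hij hjk (hca i) (hca k) (hab j) (hca j).ne
    (hbc j) (hba j i fun h => hij.ne (by rw [h])) (hba j k fun h => hjk.ne (by rw [h]))

end SimpleGraph

theorem spiderT1_hasCrossingOrNesting {α : Type*} [LinearOrder α] {ℓ : Fin 7 → α}
    (hℓ : Function.Injective ℓ) : spiderT1.HasCrossingOrNesting ℓ := by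
  refine SimpleGraph.hasCrossingOrNesting_of_spider (c := 0) (a := ![1, 2, 3]) (b := ![4, 5, 6])
    hℓ (by decide) ?_ ?_ (by decide) (by decide) <;>
  intro i <;> fin_cases i <;> simp [spiderT1]

/-- for every bijective labeling of `T1` by `{1,…,7}` there are labels
`k1 < k2 < k3 < k4` forming a forbidden configuration `H1` or `H2`. -/
theorem spiderT1_every_labeling_has_forbidden (f : Fin 7 ≃ Fin 7) :
    ∃ k1 k2 k3 k4 : Fin 7, k1 < k2 ∧ k2 < k3 ∧ k3 < k4 ∧
      ((spiderT1.Adj (f.symm k1) (f.symm k3) ∧ spiderT1.Adj (f.symm k2) (f.symm k4)) ∨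
       (spiderT1.Adj (f.symm k1) (f.symm k4) ∧ spiderT1.Adj (f.symm k2) (f.symm k3))) := by
  obtain ⟨u₁, u₂, u₃, u₄, h₁₂, h₂₃, h₃₄, hadj⟩ := spiderT1_hasCrossingOrNesting f.injective
  exact ⟨f u₁, f u₂, f u₃, f u₄, h₁₂, h₂₃, h₃₄, by simpa using hadj⟩
end

section
/- Let C_k be the cycle of length k ≥ 4. Then for every bijective labeling f : V(C_k) → {1,...,k}, there exist labels k1 < k2 < k3 < k4 such that either both {k1,k3} and {k2,k4} are edges of the labeled cycle, or both {k1,k4} and {k2,k3} are edges. -/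
/-!
Let `x` be the vertex with the smallest label and `a`, `b` its two neighbours, labelled so that
`a < b`. Since the cycle has at least four vertices, `a` has a second neighbour `c ∉ {x, b}`.
Wherever the label of `c` falls relative to `a` and `b`, the edges `xb` and `ac` either cross
(`x < a < b < c`) or nest (`x < c < a < b` or `x < a < c < b`).
-/

namespace SimpleGraph

variable {α : Type*} [LinearOrder α] {G : SimpleGraph α}

/-- The forbidden configurations `H1` (a crossing pair of edges) and `H2` (a nested pair). -/
def HasCrossingOrNestedEdges (G : SimpleGraph α) : Prop :=
  ∃ a b c d, a < b ∧ b < c ∧ c < d ∧ ((G.Adj a c ∧ G.Adj b d) ∨ (G.Adj a d ∧ G.Adj b c))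

theorem hasCrossingOrNestedEdges_of_lt {x a b c : α} (hxa : x < a) (hab : a < b) (hxc : x < c)
    (hcb : c ≠ b) (hxb : G.Adj x b) (hac : G.Adj a c) : G.HasCrossingOrNestedEdges := by
  rcases lt_trichotomy c a with hca | hca | hac'
  · exact ⟨x, c, a, b, hxc, hca, hab, .inr ⟨hxb, hac.symm⟩⟩
  · exact absurd hca.symm hac.ne
  · rcases hcb.lt_or_gt with hcb | hbc
    · exact ⟨x, a, c, b, hxa, hac', hcb, .inr ⟨hxb, hac⟩⟩
    · exact ⟨x, a, b, c, hxa, hab, hbc, .inl ⟨hxb, hac⟩⟩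

theorem hasCrossingOrNestedEdges_of_isBot {x a b c d : α} (hx : IsBot x) (hab : a ≠ b)
    (hcx : c ≠ x) (hcb : c ≠ b) (hdx : d ≠ x) (hda : d ≠ a)
    (hxa : G.Adj x a) (hxb : G.Adj x b) (hac : G.Adj a c) (hbd : G.Adj b d) :
    G.HasCrossingOrNestedEdges := by
  have hx_lt {y : α} (hy : y ≠ x) : x < y := (hx y).lt_of_ne' hy
  rcases hab.lt_or_gt with hab | hba
  · exact hasCrossingOrNestedEdges_of_lt (hx_lt hxa.ne') hab (hx_lt hcx) hcb hxb hac
  · exact hasCrossingOrNestedEdges_of_lt (hx_lt hxb.ne') hba (hx_lt hdx) hda hxa hbd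

open Fin.CommRing in
theorem cycleGraph_exists_adj_chain {n : ℕ} (x : Fin (n + 4)) :
    ∃ a b c d, a ≠ b ∧ c ≠ x ∧ c ≠ b ∧ d ≠ x ∧ d ≠ a ∧ (cycleGraph (n + 4)).Adj x a ∧
      (cycleGraph (n + 4)).Adj x b ∧ (cycleGraph (n + 4)).Adj a c ∧
      (cycleGraph (n + 4)).Adj b d := by
  have h2 : (2 : Fin (n + 4)) ≠ 0 := by
    simp [Fin.ext_iff, Nat.mod_eq_of_lt (show 2 < n + 4 by omega)]
  have h3 : (3 : Fin (n + 4)) ≠ 0 := by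
    simp [Fin.ext_iff, Nat.mod_eq_of_lt (show 3 < n + 4 by omega)]
  refine ⟨x - 1, x + 1, x - 2, x + 2, fun h => h2 ?_, fun h => h2 ?_, fun h => h3 ?_,
    fun h => h2 ?_, fun h => h3 ?_, ?_, ?_, ?_, ?_⟩
  · linear_combination -h
  · linear_combination -h
  · linear_combination -h
  · linear_combination h
  · linear_combination h
  all_goals rw [cycleGraph_adj]
  · exact .inl (by ring)
  · exact .inr (by ring)
  · exact .inl (by ring)
  · exact .inr (by ring)

end SimpleGraph

open SimpleGraph in
/-- for every bijective labeling of the cycle `C_k` (`k ≥ 4`) by `{1,…,k}`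
there are labels `k1 < k2 < k3 < k4` forming a forbidden configuration `H1` or `H2`. -/
theorem cycle_every_labeling_has_forbidden (k : ℕ) (hk : 4 ≤ k) (f : Fin k ≃ Fin k) :
    ∃ k1 k2 k3 k4 : Fin k, k1 < k2 ∧ k2 < k3 ∧ k3 < k4 ∧
      (((SimpleGraph.cycleGraph k).Adj (f.symm k1) (f.symm k3) ∧
        (SimpleGraph.cycleGraph k).Adj (f.symm k2) (f.symm k4)) ∨
       ((SimpleGraph.cycleGraph k).Adj (f.symm k1) (f.symm k4) ∧
        (SimpleGraph.cycleGraph k).Adj (f.symm k2) (f.symm k3))) := by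
  obtain ⟨n, rfl⟩ : ∃ n, k = n + 4 := ⟨k - 4, by omega⟩
  obtain ⟨a, b, c, d, hab, hcx, hcb, hdx, hda, hxa, hxb, hac, hbd⟩ :=
    cycleGraph_exists_adj_chain (f.symm 0)
  have hf {u v : Fin (n + 4)} (h : u ≠ v) : f u ≠ f v := f.injective.ne h
  have hG {u v : Fin (n + 4)} (h : (cycleGraph (n + 4)).Adj u v) :
      ((cycleGraph (n + 4)).comap f.symm).Adj (f u) (f v) := by simpa using h
  have hbot : IsBot (f (f.symm 0)) := by
    rw [f.apply_symm_apply]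
    exact fun _ => Fin.zero_le _
  show ((cycleGraph (n + 4)).comap f.symm).HasCrossingOrNestedEdges
  exact hasCrossingOrNestedEdges_of_isBot hbot (hf hab) (hf hcx) (hf hcb) (hf hdx) (hf hda)
    (hG hxa) (hG hxb) (hG hac) (hG hbd)
end

section
/- A tree G is a caterpillar (i.e., deleting all vertices of degree 1 leaves a path, possibly empty) if and only if G contains no subgraph isomorphic to the spider T1 = S(2,2,2) (a center of degree 3 with three legs of length 2). -/
/-- `G` contains a subgraph isomorphic to `H`. -/
def ContainsSub {α β : Type*} (H : SimpleGraph α) (G : SimpleGraph β) : Prop :=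
  ∃ f : α → β, Function.Injective f ∧ ∀ u v, H.Adj u v → G.Adj (f u) (f v)

/-- Deleting the degree-1 vertices of `G` leaves a path (possibly empty). -/
def LeavesPath {V : Type*} [Fintype V] [DecidableEq V] (G : SimpleGraph V)
    [DecidableRel G.Adj] : Prop :=
  ∃ n : ℕ, Nonempty ((G.induce {v : V | G.degree v ≠ 1}) ≃g SimpleGraph.pathGraph n)

namespace CaterpillarAux

open SimpleGraph Walk

variable {V : Type*} {G : SimpleGraph V}

/-- Two distinct neighbors give degree at least 2. -/
lemma two_le_degree_of_two_nbrs [Fintype V] [DecidableRel G.Adj] {v a b : V}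
    (ha : G.Adj v a) (hb : G.Adj v b) (hab : a ≠ b) : 2 ≤ G.degree v := by
  have : 1 < (G.neighborFinset v).card :=
    Finset.one_lt_card.2 ⟨a, by simpa using ha, b, by simpa using hb, hab⟩
  rwa [SimpleGraph.card_neighborFinset_eq_degree] at this

lemma exists_second_nbr [Fintype V] [DecidableEq V] [DecidableRel G.Adj] {a v : V}
    (h : G.Adj a v) (hd : G.degree a ≠ 1) : ∃ w, G.Adj a w ∧ w ≠ v := by
  have h1 : 1 ≤ G.degree a := by
    rw [← SimpleGraph.card_neighborFinset_eq_degree]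
    exact Finset.card_pos.2 ⟨v, by simpa using h⟩
  have : 0 < ((G.neighborFinset a).erase v).card := by
    rw [Finset.card_erase_of_mem (by simpa using h),
      SimpleGraph.card_neighborFinset_eq_degree]
    omega
  obtain ⟨w, hw⟩ := Finset.card_pos.1 this
  rw [Finset.mem_erase, SimpleGraph.mem_neighborFinset] at hw
  exact ⟨w, hw.2, hw.1⟩

/-- No triangles in an acyclic graph. -/
lemma no_triangle (hac : G.IsAcyclic) {x y z : V}
    (hxy : G.Adj x y) (hyz : G.Adj y z) (hxz : G.Adj x z) : False := by
  have heq := hac.path_unique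
    (⟨Walk.cons hxz Walk.nil, by simp [Walk.isPath_def, hxz.ne]⟩ : G.Path x z)
    ⟨Walk.cons hxy (Walk.cons hyz Walk.nil), by
      simp [Walk.isPath_def, hxy.ne, hyz.ne, hxz.ne]⟩
  have := congrArg (fun q : G.Path x z => q.1.length) heq
  simp at this

/-- No 4-cycles (as two distinct length-2 paths) in an acyclic graph. -/
lemma no_diamond (hac : G.IsAcyclic) {z a b w : V}
    (hza : G.Adj z a) (haw : G.Adj a w) (hzb : G.Adj z b) (hbw : G.Adj b w)
    (hab : a ≠ b) (hzw : z ≠ w) : False := by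
  have heq := hac.path_unique
    (⟨Walk.cons hza (Walk.cons haw Walk.nil), by
      simp [Walk.isPath_def, hza.ne, haw.ne, hzw]⟩ : G.Path z w)
    ⟨Walk.cons hzb (Walk.cons hbw Walk.nil), by
      simp [Walk.isPath_def, hzb.ne, hbw.ne, hzw]⟩
  have := congrArg (fun q : G.Path z w => q.1.support) heq
  simp at this
  exact hab this

lemma getVert_inj_of_isPath : ∀ {u v : V} {p : G.Walk u v}, p.IsPath →
    ∀ i j, i ≤ p.length → j ≤ p.length → p.getVert i = p.getVert j → i = j := by
  intro u v p
  induction p with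
  | nil => intro _ i j hi hj _; simp at hi hj; omega
  | @cons u c v h q ih =>
    intro hp i j hi hj hij
    rw [Walk.cons_isPath_iff] at hp
    match i, j with
    | 0, 0 => rfl
    | 0, j + 1 =>
      exfalso
      rw [Walk.getVert_zero, Walk.getVert_cons_succ] at hij
      exact hp.2 (Walk.mem_support_iff_exists_getVert.2 ⟨j, hij.symm, by
        simpa using hj⟩)
    | i + 1, 0 =>
      exfalso
      rw [Walk.getVert_zero, Walk.getVert_cons_succ] at hij
      exact hp.2 (Walk.mem_support_iff_exists_getVert.2 ⟨i, hij, by simpa using hi⟩)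
    | i + 1, j + 1 =>
      rw [Walk.getVert_cons_succ, Walk.getVert_cons_succ] at hij
      have := ih hp.1 i j (by simpa using hi) (by simpa using hj) hij
      omega

/-- In an acyclic graph, a path has no chords between non-consecutive vertices. -/
lemma no_chord [DecidableEq V] (hac : G.IsAcyclic) :
    ∀ (i : ℕ) {u v : V} (p : G.Walk u v), p.IsPath →
      ∀ j, i + 1 < j → j ≤ p.length → ¬ G.Adj (p.getVert i) (p.getVert j) := by
  intro i
  induction i with
  | zero =>
    intro u v p hp j hj hjl hadj
    rw [Walk.getVert_zero] at hadj
    have hmem : p.getVert j ∈ p.support :=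
      Walk.mem_support_iff_exists_getVert.2 ⟨j, rfl, hjl⟩
    have heq := hac.path_unique
      (⟨Walk.cons hadj Walk.nil, by simp [Walk.isPath_def, hadj.ne]⟩ : G.Path u (p.getVert j))
      ⟨p.takeUntil _ hmem, hp.takeUntil _⟩
    have hlen : (p.takeUntil _ hmem).length = 1 := by
      have := congrArg (fun q : G.Path u (p.getVert j) => q.1.length) heq
      simpa using this.symm
    have hspec := p.take_spec hmem
    have h1 : p.getVert 1 = p.getVert j := by
      conv_lhs => rw [← hspec]
      rw [Walk.getVert_append, hlen]
      simp
    have := getVert_inj_of_isPath hp 1 j (by omega) hjl h1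
    omega
  | succ i ih =>
    intro u v p hp j hj hjl hadj
    cases p with
    | nil => simp at hjl; omega
    | cons h q =>
      rename_i u' c
      rw [Walk.getVert_cons_succ] at hadj
      rw [Walk.cons_isPath_iff] at hp
      have hj1 : j - 1 ≤ q.length := by simp at hjl; omega
      obtain ⟨j', rfl⟩ : ∃ j', j = j' + 1 := ⟨j - 1, by omega⟩
      rw [Walk.getVert_cons_succ] at hadj
      exact ih q hp.1 j' (by omega) (by omega) hadj

/-- An internal vertex of a path has two distinct neighbors on the path. -/
lemma internal_two_nbrs : ∀ {u v : V} (p : G.Walk u v), p.IsPath →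
    ∀ z ∈ p.support, z ≠ u → z ≠ v →
      ∃ a b, a ≠ b ∧ G.Adj z a ∧ G.Adj z b ∧ a ∈ p.support ∧ b ∈ p.support := by
  intro u v p
  induction p with
  | nil => intro _ z hz hzu _; simp at hz; exact absurd hz hzu
  | @cons u c v h q ih =>
    intro hp z hz hzu hzv
    rw [Walk.cons_isPath_iff] at hp
    rw [Walk.support_cons, List.mem_cons] at hz
    rcases hz with rfl | hz
    · exact absurd rfl hzu
    · by_cases hzc : z = c
      · subst hzc
        cases q with
        | nil => exact absurd rfl hzv
        | @cons c d v h2 r =>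
          refine ⟨u, d, ?_, h.symm, h2, by simp, by simp⟩
          rintro rfl
          exact hp.2 (by simp)
      · obtain ⟨a, b, hab, ha, hb, has, hbs⟩ := ih hp.1 z hz hzc hzv
        exact ⟨a, b, hab, ha, hb, by simp [has], by simp [hbs]⟩

lemma exists_boundary {W : Type*} {H : SimpleGraph W} {s : Set W} :
    ∀ {y c : W} (_ : H.Walk y c), c ∈ s → y ∉ s →
      ∃ y' z', y' ∉ s ∧ z' ∈ s ∧ H.Adj y' z' := by
  intro y c q
  induction q with
  | nil => intro hc hy; exact absurd hc hy
  | @cons a b c h q ih =>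
    intro hc hy
    by_cases hb : b ∈ s
    · exact ⟨a, b, hy, hb, h⟩
    · exact ih hc hb

lemma iso_path_of_tree_maxdeg2 {W : Type*} [Fintype W] [DecidableEq W]
    (H : SimpleGraph W) (hac : H.IsAcyclic)
    (hconn : ∀ u v : W, H.Reachable u v)
    (hdeg : ∀ z a b c : W, H.Adj z a → H.Adj z b → H.Adj z c → a = b ∨ a = c ∨ b = c) :
    ∃ n, Nonempty (H ≃g SimpleGraph.pathGraph n) := by
  classical
  cases isEmpty_or_nonempty W with
  | inl hW => exact ⟨0, ⟨⟨Equiv.equivOfIsEmpty _ _, fun {a b} => isEmptyElim a⟩⟩⟩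
  | inr hW =>
    obtain ⟨u0⟩ := hW
    set P : ℕ → Prop := fun n => ∃ (u v : W) (p : H.Walk u v), p.IsPath ∧ p.length = n with hP
    have hP0 : P 0 := ⟨u0, u0, Walk.nil, by simp, rfl⟩
    have hbd : ∀ n, P n → n ≤ Fintype.card W := by
      rintro n ⟨u, v, p, hp, hl⟩
      have := hp.length_lt; omega
    set k := Nat.findGreatest P (Fintype.card W) with hk
    have hPk : P k := Nat.findGreatest_spec (Nat.zero_le _) hP0
    have hmax : ∀ n, P n → n ≤ k := fun n hn => Nat.le_findGreatest (hbd n hn) hn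
    obtain ⟨u, v, p, hp, hl⟩ := hPk
    have hall : ∀ x, x ∈ p.support := by
      by_contra hx
      push_neg at hx
      obtain ⟨x, hx⟩ := hx
      obtain ⟨q⟩ := hconn x u
      obtain ⟨y, z, hy, hz, hyz⟩ :=
        exists_boundary (s := {w | w ∈ p.support}) q p.start_mem_support hx
      by_cases hzu : z = u
      · subst hzu
        have hnew : P (k + 1) := ⟨y, v, Walk.cons hyz p, (Walk.cons_isPath_iff _ _).2 ⟨hp, hy⟩,
          by simp [hl]⟩
        have := hmax _ hnew; omega
      · by_cases hzv : z = v
        · subst hzv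
          have hyr : y ∉ p.reverse.support := by
            rw [Walk.support_reverse, List.mem_reverse]; exact hy
          have hnew : P (k + 1) := ⟨y, u, Walk.cons hyz p.reverse,
            (Walk.cons_isPath_iff _ _).2 ⟨hp.reverse, hyr⟩, by simp [hl]⟩
          have := hmax _ hnew; omega
        · obtain ⟨a, b, hab, ha, hb, has, hbs⟩ := internal_two_nbrs p hp z hz hzu hzv
          rcases hdeg z a b y ha hb hyz.symm with h | h | h
          · exact hab h
          · exact hy (h ▸ has)
          · exact hy (h ▸ hbs)
    set e : Fin (k + 1) → W := fun i => p.getVert i.val with he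
    have hbij : Function.Bijective e := by
      constructor
      · intro i j hij
        have hi := i.isLt
        have hj := j.isLt
        exact Fin.ext (getVert_inj_of_isPath hp i.val j.val (by omega) (by omega) hij)
      · intro x
        obtain ⟨n, hn, hnl⟩ := Walk.mem_support_iff_exists_getVert.1 (hall x)
        exact ⟨⟨n, by omega⟩, hn⟩
    refine ⟨k + 1, ⟨(SimpleGraph.Iso.symm ⟨Equiv.ofBijective e hbij, ?_⟩)⟩⟩
    intro a b
    show H.Adj (e a) (e b) ↔ _
    rw [SimpleGraph.pathGraph_adj]
    constructor
    · intro hadj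
      have hia := a.isLt
      have hib := b.isLt
      have hne : a.val ≠ b.val := by
        intro h
        exact H.irrefl (by rwa [he, show a = b from Fin.ext h] at hadj)
      rcases Nat.lt_or_ge a.val b.val with hlt | hge
      · left
        by_contra hne2
        have : a.val + 1 < b.val := by omega
        exact no_chord hac a.val p hp b.val this (by omega) hadj
      · right
        by_contra hne2
        have : b.val + 1 < a.val := by omega
        exact no_chord hac b.val p hp a.val this (by omega) hadj.symm
    · rintro (h | h)
      · have hib := b.isLt
        have hlt : a.val < p.length := by omega
        have := p.adj_getVert_succ hlt
        rwa [h] at this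
      · have hia := a.isLt
        have hlt : b.val < p.length := by omega
        have := p.adj_getVert_succ hlt
        rw [h] at this
        exact this.symm

lemma reachable_induce {S : Set V} : ∀ {x y : V} (p : G.Walk x y) (hx : x ∈ S) (hy : y ∈ S),
    (∀ w ∈ p.support, w ∈ S) → (G.induce S).Reachable ⟨x, hx⟩ ⟨y, hy⟩ := by
  intro x y p
  induction p with
  | nil => intro hx hy _; exact SimpleGraph.Reachable.refl _
  | @cons x c y h q ih =>
    intro hx hy hall
    have hc : c ∈ S := hall c (by simp)
    have hadj : (G.induce S).Adj ⟨x, hx⟩ ⟨c, hc⟩ := by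
      simp only [SimpleGraph.comap_adj, Function.Embedding.coe_subtype]
      exact h
    exact hadj.reachable.trans (ih hc hy fun w hw => hall w (by simp [hw]))

lemma spider_adj_iff (u v : Fin 7) : spiderT1.Adj u v ↔
    (s(u,v) = s(0,1) ∨ s(u,v) = s(0,2) ∨ s(u,v) = s(0,3) ∨ s(u,v) = s(1,4) ∨
      s(u,v) = s(2,5) ∨ s(u,v) = s(3,6)) ∧ u ≠ v := by
  rw [spiderT1, SimpleGraph.fromEdgeSet_adj]
  simp [Set.mem_insert_iff]

-- spider adjacencies
lemma spider_adj01 : spiderT1.Adj 0 1 := by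
  rw [spiderT1, SimpleGraph.fromEdgeSet_adj]; exact ⟨by simp, by decide⟩
lemma spider_adj02 : spiderT1.Adj 0 2 := by
  rw [spiderT1, SimpleGraph.fromEdgeSet_adj]; exact ⟨by simp, by decide⟩
lemma spider_adj03 : spiderT1.Adj 0 3 := by
  rw [spiderT1, SimpleGraph.fromEdgeSet_adj]; exact ⟨by simp, by decide⟩
lemma spider_adj14 : spiderT1.Adj 1 4 := by
  rw [spiderT1, SimpleGraph.fromEdgeSet_adj]; exact ⟨by simp, by decide⟩
lemma spider_adj25 : spiderT1.Adj 2 5 := by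
  rw [spiderT1, SimpleGraph.fromEdgeSet_adj]; exact ⟨by simp, by decide⟩
lemma spider_adj36 : spiderT1.Adj 3 6 := by
  rw [spiderT1, SimpleGraph.fromEdgeSet_adj]; exact ⟨by simp, by decide⟩

end CaterpillarAux

open CaterpillarAux SimpleGraph in
/-- a tree is a caterpillar iff it contains no subgraph isomorphic to
the spider `T1 = S(2,2,2)`. -/
theorem tree_caterpillar_iff_no_spider {V : Type*} [Fintype V] [DecidableEq V]
    (G : SimpleGraph V) [DecidableRel G.Adj] (hG : G.IsTree) :
    LeavesPath G ↔ ¬ ContainsSub spiderT1 G := by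
  classical
  constructor
  · rintro ⟨n, ⟨g⟩⟩ ⟨f, finj, hf⟩
    have hne : ∀ i j : Fin 7, i ≠ j → f i ≠ f j := fun i j h e => h (finj e)
    have h01 : G.Adj (f 0) (f 1) := hf 0 1 spider_adj01
    have h02 : G.Adj (f 0) (f 2) := hf 0 2 spider_adj02
    have h03 : G.Adj (f 0) (f 3) := hf 0 3 spider_adj03
    have h14 : G.Adj (f 1) (f 4) := hf 1 4 spider_adj14
    have h25 : G.Adj (f 2) (f 5) := hf 2 5 spider_adj25
    have h36 : G.Adj (f 3) (f 6) := hf 3 6 spider_adj36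
    have hd0 : G.degree (f 0) ≠ 1 := by
      have := two_le_degree_of_two_nbrs h01 h02 (hne 1 2 (by decide)); omega
    have hd1 : G.degree (f 1) ≠ 1 := by
      have := two_le_degree_of_two_nbrs h01.symm h14 (hne 0 4 (by decide)); omega
    have hd2 : G.degree (f 2) ≠ 1 := by
      have := two_le_degree_of_two_nbrs h02.symm h25 (hne 0 5 (by decide)); omega
    have hd3 : G.degree (f 3) ≠ 1 := by
      have := two_le_degree_of_two_nbrs h03.symm h36 (hne 0 6 (by decide)); omega
    set S : Set V := {v : V | G.degree v ≠ 1} with hS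
    let x0 : S := ⟨f 0, hd0⟩
    let x1 : S := ⟨f 1, hd1⟩
    let x2 : S := ⟨f 2, hd2⟩
    let x3 : S := ⟨f 3, hd3⟩
    have a1 : (G.induce S).Adj x0 x1 := by
      simp only [SimpleGraph.comap_adj, Function.Embedding.coe_subtype]; exact h01
    have a2 : (G.induce S).Adj x0 x2 := by
      simp only [SimpleGraph.comap_adj, Function.Embedding.coe_subtype]; exact h02
    have a3 : (G.induce S).Adj x0 x3 := by
      simp only [SimpleGraph.comap_adj, Function.Embedding.coe_subtype]; exact h03
    have p1 := g.map_rel_iff.mpr a1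
    have p2 := g.map_rel_iff.mpr a2
    have p3 := g.map_rel_iff.mpr a3
    rw [SimpleGraph.pathGraph_adj] at p1 p2 p3
    have d12 : (g x1).val ≠ (g x2).val := by
      intro h
      have : x1 = x2 := g.injective (Fin.ext h)
      exact hne 1 2 (by decide) (congrArg Subtype.val this)
    have d13 : (g x1).val ≠ (g x3).val := by
      intro h
      have : x1 = x3 := g.injective (Fin.ext h)
      exact hne 1 3 (by decide) (congrArg Subtype.val this)
    have d23 : (g x2).val ≠ (g x3).val := by
      intro h
      have : x2 = x3 := g.injective (Fin.ext h)
      exact hne 2 3 (by decide) (congrArg Subtype.val this)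
    omega
  · intro hns
    set S : Set V := {v : V | G.degree v ≠ 1} with hS
    have hdeg : ∀ z a b c : S, (G.induce S).Adj z a → (G.induce S).Adj z b →
        (G.induce S).Adj z c → a = b ∨ a = c ∨ b = c := by
      intro z a b c ha hb hc
      by_contra hcon
      push_neg at hcon
      obtain ⟨hab, hac, hbc⟩ := hcon
      simp only [SimpleGraph.comap_adj, Function.Embedding.coe_subtype] at ha hb hc
      have hab' : a.1 ≠ b.1 := fun e => hab (Subtype.ext e)
      have hac' : a.1 ≠ c.1 := fun e => hac (Subtype.ext e)
      have hbc' : b.1 ≠ c.1 := fun e => hbc (Subtype.ext e)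
      obtain ⟨a', haa', ha'z⟩ := exists_second_nbr ha.symm a.2
      obtain ⟨b', hbb', hb'z⟩ := exists_second_nbr hb.symm b.2
      obtain ⟨c', hcc', hc'z⟩ := exists_second_nbr hc.symm c.2
      have hacyc := hG.IsAcyclic
      -- distinctness facts
      have nza : z.1 ≠ a.1 := ha.ne
      have nzb : z.1 ≠ b.1 := hb.ne
      have nzc : z.1 ≠ c.1 := hc.ne
      have nza' : z.1 ≠ a' := fun e => ha'z e.symm
      have nzb' : z.1 ≠ b' := fun e => hb'z e.symm
      have nzc' : z.1 ≠ c' := fun e => hc'z e.symm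
      have naa' : a.1 ≠ a' := haa'.ne
      have nbb' : b.1 ≠ b' := hbb'.ne
      have ncc' : c.1 ≠ c' := hcc'.ne
      have nab' : a.1 ≠ b' := by
        rintro rfl
        exact no_triangle hacyc hb hbb' ha
      have nac' : a.1 ≠ c' := by
        rintro rfl
        exact no_triangle hacyc hc hcc' ha
      have nba' : b.1 ≠ a' := by
        rintro rfl
        exact no_triangle hacyc ha haa' hb
      have nbc' : b.1 ≠ c' := by
        rintro rfl
        exact no_triangle hacyc hc hcc' hb
      have nca' : c.1 ≠ a' := by
        rintro rfl
        exact no_triangle hacyc ha haa' hc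
      have ncb' : c.1 ≠ b' := by
        rintro rfl
        exact no_triangle hacyc hb hbb' hc
      have na'b' : a' ≠ b' := by
        rintro rfl
        exact no_diamond hacyc ha haa' hb hbb' hab' nza'
      have na'c' : a' ≠ c' := by
        rintro rfl
        exact no_diamond hacyc ha haa' hc hcc' hac' nza'
      have nb'c' : b' ≠ c' := by
        rintro rfl
        exact no_diamond hacyc hb hbb' hc hcc' hbc' nzb'
      refine hns ⟨![z.1, a.1, b.1, c.1, a', b', c'], ?_, ?_⟩
      · intro i j hij
        fin_cases i <;> fin_cases j <;>
          first
            | rfl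
            | exact absurd (show _ = _ from hij) (by assumption)
            | exact absurd (show _ = _ from hij).symm (by assumption)
      · intro u v huv
        rw [spider_adj_iff] at huv
        obtain ⟨hm, -⟩ := huv
        simp only [Sym2.eq_iff] at hm
        rcases hm with (⟨rfl,rfl⟩|⟨rfl,rfl⟩)|(⟨rfl,rfl⟩|⟨rfl,rfl⟩)|(⟨rfl,rfl⟩|⟨rfl,rfl⟩)|
          (⟨rfl,rfl⟩|⟨rfl,rfl⟩)|(⟨rfl,rfl⟩|⟨rfl,rfl⟩)|(⟨rfl,rfl⟩|⟨rfl,rfl⟩)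
        exacts [ha, ha.symm, hb, hb.symm, hc, hc.symm, haa', haa'.symm, hbb', hbb'.symm,
          hcc', hcc'.symm]
    have hconn : ∀ x y : S, (G.induce S).Reachable x y := by
      rintro ⟨x, hx⟩ ⟨y, hy⟩
      obtain ⟨w⟩ := hG.isConnected.preconnected x y
      let pp := w.toPath
      refine reachable_induce pp.1 hx hy ?_
      intro t ht
      by_cases htx : t = x
      · subst htx; exact hx
      by_cases hty : t = y
      · subst hty; exact hy
      obtain ⟨a, b, hab, hta, htb, _, _⟩ := internal_two_nbrs pp.1 pp.2 t ht htx hty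
      have := two_le_degree_of_two_nbrs hta htb hab
      simp only [hS, Set.mem_setOf_eq]
      omega
    have hacT : (G.induce S).IsAcyclic := by
      apply SimpleGraph.isAcyclic_of_path_unique
      intro x y p q
      have hinj : Function.Injective (SimpleGraph.Embedding.induce (G := G) S).toHom :=
        (SimpleGraph.Embedding.induce (G := G) S).injective
      have hp : (p.1.map (SimpleGraph.Embedding.induce (G := G) S).toHom).IsPath :=
        SimpleGraph.Walk.map_isPath_of_injective hinj p.2
      have hq : (q.1.map (SimpleGraph.Embedding.induce (G := G) S).toHom).IsPath :=
        SimpleGraph.Walk.map_isPath_of_injective hinj q.2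
      have := hG.IsAcyclic.path_unique ⟨_, hp⟩ ⟨_, hq⟩
      have heq : p.1.map (SimpleGraph.Embedding.induce (G := G) S).toHom
          = q.1.map (SimpleGraph.Embedding.induce (G := G) S).toHom := congrArg Subtype.val this
      exact Subtype.ext (SimpleGraph.Walk.map_injective_of_injective hinj _ _ heq)
    exact iso_path_of_tree_maxdeg2 (G.induce S) hacT hconn hdeg
end

section
/- Every caterpillar has a degree complete labeling: there is a bijection f from its vertex set to {1,...,n} such that no four labels k1 < k2 < k3 < k4 satisfy either (both {k1,k3},{k2,k4} are edges) or (both {k1,k4},{k2,k3} are edges). -/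
/-- The labeling `f` of `G` yields a forbidden configuration `H1` or `H2`. -/
def HasForbidden {V : Type*} {n : ℕ} (G : SimpleGraph V) (f : V ≃ Fin n) : Prop :=
  ∃ v1 v2 v3 v4 : V, f v1 < f v2 ∧ f v2 < f v3 ∧ f v3 < f v4 ∧
    ((G.Adj v1 v3 ∧ G.Adj v2 v4) ∨ (G.Adj v1 v4 ∧ G.Adj v2 v3))

/-- `G` has a degree complete labeling: some bijective labeling by `{1,…,n}`
avoids both forbidden configurations. -/
def HasDCLabeling {V : Type*} (G : SimpleGraph V) : Prop :=
  ∃ (n : ℕ) (f : V ≃ Fin n), ¬ HasForbidden G f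

/-- `G` is a caterpillar: a tree such that deleting the degree-1 vertices leaves a
path (possibly empty). -/
def IsCaterpillar {V : Type*} [Fintype V] [DecidableEq V] (G : SimpleGraph V)
    [DecidableRel G.Adj] : Prop :=
  G.IsTree ∧ ∃ n : ℕ,
    Nonempty ((G.induce {v : V | G.degree v ≠ 1}) ≃g SimpleGraph.pathGraph n)

/-- every caterpillar has a degree complete labeling. -/
theorem caterpillar_hasDCLabeling {V : Type*} [Fintype V] [DecidableEq V]
    (G : SimpleGraph V) [DecidableRel G.Adj] (hG : IsCaterpillar G) :
    HasDCLabeling G := by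
  classical
  obtain ⟨htree, n, ⟨φ⟩⟩ := hG
  by_cases hsmall : Fintype.card V ≤ 3
  · -- with at most 3 vertices there can be no forbidden configuration
    refine ⟨Fintype.card V, Fintype.equivFin V, ?_⟩
    rintro ⟨v1, v2, v3, v4, h12, h23, h34, -⟩
    have i4 := (Fintype.equivFin V v4).isLt
    have l1 : (Fintype.equivFin V v1).val < (Fintype.equivFin V v2).val := h12
    have l2 : (Fintype.equivFin V v2).val < (Fintype.equivFin V v3).val := h23
    have l3 : (Fintype.equivFin V v3).val < (Fintype.equivFin V v4).val := h34
    omega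
  push_neg at hsmall
  -- no edge joins two degree-one vertices
  have hB : ∀ u v : V, G.Adj u v → G.degree u = 1 → G.degree v = 1 → False := by
    intro u v huv hu hv
    have huniq : ∀ x y z : V, G.degree x = 1 → G.Adj x y → G.Adj x z → y = z := by
      intro x y z hx hy hz
      have hc : (G.neighborFinset x).card ≤ 1 := le_of_eq hx
      exact Finset.card_le_one.mp hc y ((G.mem_neighborFinset x y).mpr hy) z
        ((G.mem_neighborFinset x z).mpr hz)
    have step : ∀ x y : V, G.Adj x y → (x = u ∨ x = v) → (y = u ∨ y = v) := by
      rintro x y hxy (rfl | rfl)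
      · exact Or.inr (huniq x y v hu hxy huv)
      · exact Or.inl (huniq x y u hv hxy huv.symm)
    have hall : ∀ (x w : V) (p : G.Walk x w), (x = u ∨ x = v) → (w = u ∨ w = v) := by
      intro x w p
      induction p with
      | nil => exact id
      | cons h p ih => intro hx; exact ih (step _ _ h hx)
    have hsub : (Finset.univ : Finset V) ⊆ {u, v} := by
      intro w _
      obtain ⟨p⟩ := htree.isConnected.preconnected u w
      rcases hall u w p (Or.inl rfl) with rfl | rfl <;> simp
    have h1 := Finset.card_le_card hsub
    have h2 : ({u, v} : Finset V).card ≤ 2 :=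
      le_trans (Finset.card_insert_le _ _) (by simp)
    have h3 : (Finset.univ : Finset V).card = Fintype.card V := Finset.card_univ
    omega
  -- every degree-one vertex has a spine neighbor
  have hA : ∀ v : V, G.degree v = 1 → ∃ w, G.Adj v w ∧ G.degree w ≠ 1 := by
    intro v hv
    have hpos : 0 < (G.neighborFinset v).card := by
      have : (G.neighborFinset v).card = 1 := hv
      omega
    obtain ⟨w, hw⟩ := Finset.card_pos.mp hpos
    have hadj : G.Adj v w := (G.mem_neighborFinset v w).mp hw
    exact ⟨w, hadj, fun h1 => hB v w hadj hv h1⟩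
  -- the "support" map
  have hsp' : ∀ v : V, ∃ w, G.degree w ≠ 1 ∧ (w = v ∨ G.Adj v w) ∧
      (G.degree v ≠ 1 → w = v) := by
    intro v
    by_cases hv : G.degree v = 1
    · obtain ⟨w, hw, hw1⟩ := hA v hv
      exact ⟨w, hw1, Or.inr hw, fun h => absurd hv h⟩
    · exact ⟨v, hv, Or.inl rfl, fun _ => rfl⟩
  choose sp hsp1 hsp2 hsp3 using hsp'
  set c := Fintype.card V with hc
  set e := Fintype.equivFin V with he
  set σ : V → ℕ := fun v => (φ ⟨sp v, hsp1 v⟩ : Fin n).val with hσdef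
  set key : V → ℕ :=
    fun v => σ v * (2 * c) + (if G.degree v ≠ 1 then c else 0) + (e v).val with hkeydef
  have hσS : ∀ (v : V) (hv : G.degree v ≠ 1), σ v = (φ ⟨v, hv⟩ : Fin n).val := by
    intro v hv
    have hs : (⟨sp v, hsp1 v⟩ : {v : V | G.degree v ≠ 1}) = ⟨v, hv⟩ :=
      Subtype.ext (hsp3 v hv)
    simp only [hσdef, hs]
  -- uniqueness of spine vertex within each class
  have huniqS : ∀ u v : V, G.degree u ≠ 1 → G.degree v ≠ 1 → σ u = σ v → u = v := by
    intro u v hu hv h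
    rw [hσS u hu, hσS v hv] at h
    have h2 : (φ ⟨u, hu⟩ : Fin n) = φ ⟨v, hv⟩ := Fin.val_injective h
    have h3 := φ.injective h2
    exact congrArg Subtype.val h3
  have hkey_lt : ∀ u v : V, σ u < σ v → key u < key v := by
    intro u v h
    have h1 : key u < (σ u + 1) * (2 * c) := by
      have h2 := (e u).isLt
      have h3 : (if G.degree u ≠ 1 then c else 0) ≤ c := by split <;> omega
      have h4 : (σ u + 1) * (2 * c) = σ u * (2 * c) + 2 * c := by ring
      rw [h4]
      simp only [hkeydef]
      omega
    have h2 : (σ u + 1) * (2 * c) ≤ σ v * (2 * c) := Nat.mul_le_mul_right _ h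
    have h3 : σ v * (2 * c) ≤ key v := by simp only [hkeydef]; omega
    omega
  -- within a class, the spine vertex has the largest key
  have hmax : ∀ u v : V, σ u = σ v → G.degree u = 1 → G.degree v ≠ 1 → key u < key v := by
    intro u v hσ hu hv
    have h0 : σ u * (2 * c) = σ v * (2 * c) := by rw [hσ]
    have h2 := (e u).isLt
    simp only [hkeydef, if_neg (not_not_intro hu), if_pos hv]
    omega
  have hσle : ∀ u v : V, key u < key v → σ u ≤ σ v := by
    intro u v h
    by_contra h2
    exact absurd (hkey_lt v u (by omega)) (by omega)
  have hkeyinj : Function.Injective key := by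
    intro u v h
    have hσ : σ u = σ v := by
      rcases lt_trichotomy (σ u) (σ v) with h1 | h1 | h1
      · exact absurd (hkey_lt u v h1) (by omega)
      · exact h1
      · exact absurd (hkey_lt v u h1) (by omega)
    by_cases hu : G.degree u = 1 <;> by_cases hv : G.degree v = 1
    · have h0 : σ u * (2 * c) = σ v * (2 * c) := by rw [hσ]
      have h2 : (e u).val = (e v).val := by
        simp only [hkeydef, if_neg (not_not_intro hu), if_neg (not_not_intro hv)] at h
        omega
      exact e.injective (Fin.val_injective h2)
    · exact absurd (hmax u v hσ hu hv) (by omega)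
    · exact absurd (hmax v u hσ.symm hv hu) (by omega)
    · exact huniqS u v hu hv hσ
  -- edge structure
  have hedge : ∀ u v : V, G.Adj u v →
      (σ u = σ v ∧ ((G.degree u ≠ 1 ∧ G.degree v = 1) ∨ (G.degree u = 1 ∧ G.degree v ≠ 1)))
      ∨ (G.degree u ≠ 1 ∧ G.degree v ≠ 1 ∧ (σ u + 1 = σ v ∨ σ v + 1 = σ u)) := by
    have huniq : ∀ x y z : V, G.degree x = 1 → G.Adj x y → G.Adj x z → y = z := by
      intro x y z hx hy hz
      have hcard : (G.neighborFinset x).card ≤ 1 := le_of_eq hx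
      exact Finset.card_le_one.mp hcard y ((G.mem_neighborFinset x y).mpr hy) z
        ((G.mem_neighborFinset x z).mpr hz)
    have hleaf : ∀ u v : V, G.Adj u v → G.degree u = 1 → G.degree v ≠ 1 → σ u = σ v := by
      intro u v huv hu hv
      have hadj : G.Adj u (sp u) := by
        rcases hsp2 u with h | h
        · exact absurd hu (h ▸ hsp1 u)
        · exact h
      have hspv : sp u = v := huniq u (sp u) v hu hadj huv
      have : (⟨sp u, hsp1 u⟩ : {v : V | G.degree v ≠ 1}) = ⟨v, hv⟩ := Subtype.ext hspv
      rw [hσS v hv]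
      simp only [hσdef, this]
    intro u v huv
    by_cases hu : G.degree u = 1 <;> by_cases hv : G.degree v = 1
    · exact absurd (hB u v huv hu hv) id
    · exact Or.inl ⟨hleaf u v huv hu hv, Or.inr ⟨hu, hv⟩⟩
    · exact Or.inl ⟨(hleaf v u huv.symm hv hu).symm, Or.inl ⟨hu, hv⟩⟩
    · refine Or.inr ⟨hu, hv, ?_⟩
      have hadj : (G.induce {v : V | G.degree v ≠ 1}).Adj ⟨u, hu⟩ ⟨v, hv⟩ := huv
      have hpath := φ.map_rel_iff.mpr hadj
      rw [SimpleGraph.pathGraph_adj] at hpath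
      rw [hσS u hu, hσS v hv]
      exact hpath
  -- the linear order induced by `key`, and the resulting labeling
  letI lo : LinearOrder V := LinearOrder.lift' key hkeyinj
  let f : Fin c ≃o V := monoEquivOfFin V rfl
  refine ⟨c, f.symm.toEquiv, ?_⟩
  rintro ⟨v1, v2, v3, v4, h12, h23, h34, hedges⟩
  have hmono : ∀ a b : V, f.symm.toEquiv a < f.symm.toEquiv b → key a < key b := by
    intro a b h
    have h2 : a < b := f.symm.lt_iff_lt.mp h
    exact h2
  have k12 : key v1 < key v2 := hmono _ _ h12
  have k23 : key v2 < key v3 := hmono _ _ h23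
  have k34 : key v3 < key v4 := hmono _ _ h34
  have hF : ∀ a b : V, G.Adj a b → key a < key b →
      G.degree b ≠ 1 ∧ (σ a = σ b ∨ (σ a + 1 = σ b ∧ G.degree a ≠ 1)) := by
    intro a b hab hk
    rcases hedge a b hab with ⟨hσ, hcase⟩ | ⟨ha, hb, hcase⟩
    · rcases hcase with ⟨ha, hb⟩ | ⟨ha, hb⟩
      · exact absurd (hmax b a hσ.symm hb ha) (by omega)
      · exact ⟨hb, Or.inl hσ⟩
    · rcases hcase with h | h
      · exact ⟨hb, Or.inr ⟨h, ha⟩⟩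
      · exact absurd (hkey_lt b a (by omega)) (by omega)
  rcases hedges with ⟨e13, e24⟩ | ⟨e14, e23⟩
  · -- crossing configuration
    obtain ⟨hS3, hσ13⟩ := hF v1 v3 e13 (by omega)
    obtain ⟨hS4, hσ24⟩ := hF v2 v4 e24 (by omega)
    have s34 : σ v3 ≤ σ v4 := hσle _ _ k34
    have s23 : σ v2 ≤ σ v3 := hσle _ _ k23
    have hne34 : σ v3 ≠ σ v4 := fun h => by
      have h2 := huniqS v3 v4 hS3 hS4 h
      subst h2; omega
    rcases hσ24 with h24 | ⟨h24, hS2⟩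
    · omega
    · have h23' : σ v2 = σ v3 := by omega
      have h2 := huniqS v2 v3 hS2 hS3 h23'
      subst h2; omega
  · -- nesting configuration
    obtain ⟨hS4, hσ14⟩ := hF v1 v4 e14 (by omega)
    obtain ⟨hS3, -⟩ := hF v2 v3 e23 k23
    have s34 : σ v3 ≤ σ v4 := hσle _ _ k34
    have s13 : σ v1 ≤ σ v3 := hσle _ _ (by omega)
    have hne34 : σ v3 ≠ σ v4 := fun h => by
      have h2 := huniqS v3 v4 hS3 hS4 h
      subst h2; omega
    rcases hσ14 with h14 | ⟨h14, hS1⟩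
    · omega
    · have h13 : σ v1 = σ v3 := by omega
      have h2 := huniqS v1 v3 hS1 hS3 h13
      subst h2; omega
end

section
/- If a graph G contains a subgraph isomorphic to T1, to T2, or to a cycle C_k with k ≥ 4, then G has no degree complete labeling: for every bijective labeling of V(G), the labeled graph contains a forbidden configuration H1 or H2. -/
/-- The net graph `T2`: a triangle with a pendant leaf at each vertex. -/
def netT2 : SimpleGraph (Fin 6) :=
  SimpleGraph.fromEdgeSet {s(0, 1), s(1, 2), s(0, 2), s(0, 3), s(1, 4), s(2, 5)}

/-!
A labeling avoids `H1` and `H2` exactly when any two disjoint edges have their labels in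
disjoint intervals. So it suffices to find an edge `ab` whose labels enclose the label of a
vertex `c` with a neighbour `d ∉ {a, b}`: the edge `cd` then crosses or nests in `ab`.
In the net, the triangle vertex of middle label is enclosed by the opposite triangle edge. In
the spider, the middle-labelled neighbour of the centre `z` is enclosed by the edge from `z` to
the neighbour on the far side of `z`'s own label. In a cycle of length at least `4`, the vertex
of least label and its neighbour of larger label span an edge enclosing its other neighbour.
-/

theorem mem_uIoo_or_mem_uIoo_or_mem_uIoo {α : Type*} [LinearOrder α] {a b c : α}
    (hab : a ≠ b) (hbc : b ≠ c) (hac : a ≠ c) :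
    a ∈ Set.uIoo b c ∨ b ∈ Set.uIoo a c ∨ c ∈ Set.uIoo a b := by
  simp only [Set.uIoo, Set.mem_Ioo, inf_lt_iff, lt_sup_iff]
  grind

section Labeling

variable {V : Type*} {n : ℕ} {G : SimpleGraph V} (f : V ≃ Fin n)

theorem hasForbidden_of_mem_uIoo_of_adj {a b c d : V} (hab : G.Adj a b)
    (hc : f c ∈ Set.uIoo (f a) (f b)) (hcd : G.Adj c d) (hda : d ≠ a) (hdb : d ≠ b) :
    HasForbidden G f := by
  wlog hlt : f a < f b generalizing a b
  · refine this hab.symm (Set.uIoo_comm (f a) (f b) ▸ hc) hdb hda ?_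
    exact (not_lt.1 hlt).lt_of_ne (f.injective.ne hab.ne')
  obtain ⟨hac, hcb⟩ : f a < f c ∧ f c < f b := by rwa [Set.uIoo_of_lt hlt] at hc
  rcases lt_trichotomy (f d) (f a) with hd | hd | had
  · exact ⟨d, a, c, b, hd, hac, hcb, .inl ⟨hcd.symm, hab⟩⟩
  · exact absurd (f.injective hd) hda
  rcases lt_trichotomy (f d) (f c) with hd | hd | hcd'
  · exact ⟨a, d, c, b, had, hd, hcb, .inr ⟨hab, hcd.symm⟩⟩
  · exact absurd (f.injective hd) hcd.ne'
  rcases lt_trichotomy (f d) (f b) with hd | hd | hbd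
  · exact ⟨a, c, d, b, hac, hcd', hd, .inr ⟨hab, hcd⟩⟩
  · exact absurd (f.injective hd) hdb
  · exact ⟨a, c, b, d, hac, hcb, hbd, .inl ⟨hab, hcd⟩⟩

theorem hasForbidden_of_mem_uIoo_of_adj_of_adj {z u w m d : V} (hzu : G.Adj z u)
    (hzw : G.Adj z w) (hm : f m ∈ Set.uIoo (f u) (f w)) (hmz : m ≠ z) (hmd : G.Adj m d)
    (hdu : d ≠ u) (hdw : d ≠ w) (hdz : d ≠ z) : HasForbidden G f := by
  wlog hlt : f u < f w generalizing u w
  · refine this hzw hzu (Set.uIoo_comm (f u) (f w) ▸ hm) hdw hdu ?_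
    have huw : f u ≠ f w := fun h => by simp [h] at hm
    exact (not_lt.1 hlt).lt_of_ne huw.symm
  obtain ⟨hum, hmw⟩ : f u < f m ∧ f m < f w := by rwa [Set.uIoo_of_lt hlt] at hm
  rcases (f.injective.ne hmz).lt_or_gt with hmz' | hzm
  · exact hasForbidden_of_mem_uIoo_of_adj f hzu.symm (Set.mem_uIoo_of_lt hum hmz') hmd hdu hdz
  · exact hasForbidden_of_mem_uIoo_of_adj f hzw (Set.mem_uIoo_of_lt hzm hmw) hmd hdz hdw

theorem hasForbidden_of_containsSub_netT2 (hC : ContainsSub netT2 G) : HasForbidden G f := by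
  obtain ⟨g, hg, hadj⟩ := hC
  have adj (i j : Fin 6) (h : netT2.Adj i j := by simp [netT2]) : G.Adj (g i) (g j) := hadj i j h
  have ne (i j : Fin 6) (h : i ≠ j := by decide) : g i ≠ g j := hg.ne h
  have lab (i j : Fin 6) (h : i ≠ j := by decide) : f (g i) ≠ f (g j) :=
    f.injective.ne (ne i j h)
  rcases mem_uIoo_or_mem_uIoo_or_mem_uIoo (lab 0 1) (lab 1 2) (lab 0 2) with h | h | h
  · exact hasForbidden_of_mem_uIoo_of_adj f (adj 1 2) h (adj 0 3) (ne 3 1) (ne 3 2)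
  · exact hasForbidden_of_mem_uIoo_of_adj f (adj 0 2) h (adj 1 4) (ne 4 0) (ne 4 2)
  · exact hasForbidden_of_mem_uIoo_of_adj f (adj 0 1) h (adj 2 5) (ne 5 0) (ne 5 1)

theorem hasForbidden_of_containsSub_spiderT1 (hC : ContainsSub spiderT1 G) :
    HasForbidden G f := by
  obtain ⟨g, hg, hadj⟩ := hC
  have adj (i j : Fin 7) (h : spiderT1.Adj i j := by simp [spiderT1]) : G.Adj (g i) (g j) :=
    hadj i j h
  have ne (i j : Fin 7) (h : i ≠ j := by decide) : g i ≠ g j := hg.ne h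
  have lab (i j : Fin 7) (h : i ≠ j := by decide) : f (g i) ≠ f (g j) :=
    f.injective.ne (ne i j h)
  rcases mem_uIoo_or_mem_uIoo_or_mem_uIoo (lab 1 2) (lab 2 3) (lab 1 3) with h | h | h
  · exact hasForbidden_of_mem_uIoo_of_adj_of_adj f (adj 0 2) (adj 0 3) h (ne 1 0) (adj 1 4)
      (ne 4 2) (ne 4 3) (ne 4 0)
  · exact hasForbidden_of_mem_uIoo_of_adj_of_adj f (adj 0 1) (adj 0 3) h (ne 2 0) (adj 2 5)
      (ne 5 1) (ne 5 3) (ne 5 0)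
  · exact hasForbidden_of_mem_uIoo_of_adj_of_adj f (adj 0 1) (adj 0 2) h (ne 3 0) (adj 3 6)
      (ne 6 1) (ne 6 2) (ne 6 0)

open Fin.CommRing in
theorem hasForbidden_of_containsSub_cycleGraph {k : ℕ} (hk : 4 ≤ k)
    (hC : ContainsSub (SimpleGraph.cycleGraph k) G) : HasForbidden G f := by
  obtain ⟨m, rfl⟩ : ∃ m, k = m + 4 := ⟨k - 4, by omega⟩
  obtain ⟨g, hg, hadj⟩ := hC
  have adj (i : Fin (m + 4)) : G.Adj (g i) (g (i + 1)) :=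
    hadj _ _ (SimpleGraph.cycleGraph_adj.2 (.inr (by ring)))
  have adj_sub (i : Fin (m + 4)) : G.Adj (g i) (g (i - 1)) := by
    simpa using (adj (i - 1)).symm
  have one : (1 : Fin (m + 4)) ≠ 0 := by simp
  have two : (2 : Fin (m + 4)) ≠ 0 := by simp [Fin.ext_iff, Nat.mod_eq_of_lt]
  have three : (3 : Fin (m + 4)) ≠ 0 := by simp [Fin.ext_iff, Nat.mod_eq_of_lt]
  obtain ⟨i, -, hmin⟩ := Finset.univ.exists_min_image (fun j => f (g j)) Finset.univ_nonempty
  have lt_of_ne {j : Fin (m + 4)} (hj : j ≠ i) : f (g i) < f (g j) :=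
    (hmin j (Finset.mem_univ j)).lt_of_ne (f.injective.ne (hg.ne hj.symm))
  rcases (f.injective.ne (hg.ne fun h => two (by linear_combination h) :
      g (i + 1) ≠ g (i - 1))).lt_or_gt with hlt | hgt
  · have hi : f (g i) < f (g (i + 1)) := lt_of_ne fun h => one (by linear_combination h)
    exact hasForbidden_of_mem_uIoo_of_adj f (adj_sub i) (Set.mem_uIoo_of_lt hi hlt)
      (adj (i + 1)) (hg.ne fun h => two (by linear_combination h))
      (hg.ne fun h => three (by linear_combination h))
  · have hi : f (g i) < f (g (i - 1)) := lt_of_ne fun h => one (by linear_combination -h)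
    exact hasForbidden_of_mem_uIoo_of_adj f (adj i) (Set.mem_uIoo_of_lt hi hgt)
      (adj_sub (i - 1)) (hg.ne fun h => two (by linear_combination -h))
      (hg.ne fun h => three (by linear_combination -h))

end Labeling

/-- if `G` contains a subgraph isomorphic to `T1`, to `T2`, or to a cycle
`C_k` with `k ≥ 4`, then every bijective labeling of `G` contains a forbidden
configuration `H1` or `H2`. -/
theorem no_dcLabeling_of_contains {V : Type*} (G : SimpleGraph V)
    (h : ContainsSub spiderT1 G ∨ ContainsSub netT2 G ∨
      ∃ k : ℕ, 4 ≤ k ∧ ContainsSub (SimpleGraph.cycleGraph k) G) :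
    ∀ (n : ℕ) (f : V ≃ Fin n), HasForbidden G f := by
  intro n f
  rcases h with h | h | ⟨k, hk, h⟩
  · exact hasForbidden_of_containsSub_spiderT1 f h
  · exact hasForbidden_of_containsSub_netT2 f h
  · exact hasForbidden_of_containsSub_cycleGraph f hk h
end

section
/- Let G be a connected simple graph containing no subgraph isomorphic to T2 and no cycle of length ≥ 4. Then no edge of G lies in two distinct triangles, and every triangle of G contains a vertex of degree 2. -/
lemma extra_nbr {V : Type*} [Fintype V] [DecidableEq V] (G : SimpleGraph V)
    [DecidableRel G.Adj] {u v w : V} (huv : G.Adj u v) (huw : G.Adj u w)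
    (hvw : v ≠ w) (hdeg : G.degree u ≠ 2) :
    ∃ x, G.Adj u x ∧ x ≠ v ∧ x ≠ w := by
  by_contra h
  push_neg at h
  apply hdeg
  have : G.neighborFinset u = {v, w} := by
    apply Finset.Subset.antisymm
    · intro x hx
      rw [SimpleGraph.mem_neighborFinset] at hx
      by_cases hxv : x = v
      · simp [hxv]
      · simp [h x hx hxv]
    · intro x hx
      simp only [Finset.mem_insert, Finset.mem_singleton] at hx
      rw [SimpleGraph.mem_neighborFinset]
      rcases hx with rfl | rfl <;> assumption
  rw [SimpleGraph.degree, this, Finset.card_insert_of_notMem (by simp [hvw]),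
    Finset.card_singleton]

lemma inj4 {V : Type*} (u v w x : V) (h1 : u ≠ v) (h2 : u ≠ w) (h3 : u ≠ x)
    (h4 : v ≠ w) (h5 : v ≠ x) (h6 : w ≠ x) : Function.Injective ![u, v, w, x] := by
  intro a b hab
  fin_cases a <;> fin_cases b <;> simp only [Matrix.cons_val_zero, Matrix.cons_val_one,
    Matrix.head_cons, Matrix.cons_val_succ] at hab <;>
    first | rfl | (exact absurd hab (by tauto))

lemma inj6 {V : Type*} (u v w x y z : V) (h1 : u ≠ v) (h2 : u ≠ w) (h3 : u ≠ x)
    (h4 : u ≠ y) (h5 : u ≠ z) (h6 : v ≠ w) (h7 : v ≠ x) (h8 : v ≠ y) (h9 : v ≠ z)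
    (h10 : w ≠ x) (h11 : w ≠ y) (h12 : w ≠ z) (h13 : x ≠ y) (h14 : x ≠ z)
    (h15 : y ≠ z) : Function.Injective ![u, v, w, x, y, z] := by
  intro a b hab
  fin_cases a <;> fin_cases b <;> simp only [Matrix.cons_val_zero, Matrix.cons_val_one,
    Matrix.head_cons, Matrix.cons_val_succ] at hab <;>
    first | rfl | (exact absurd hab (by tauto))

/-- if `G` is connected, contains no subgraph isomorphic to `T2` and no
cycle of length `≥ 4`, then no edge of `G` lies in two distinct triangles, and every
triangle of `G` contains a vertex of degree 2. -/
theorem no_edge_in_two_triangles_and_triangle_has_deg_two {V : Type*} [Fintype V]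
    [DecidableEq V] (G : SimpleGraph V) [DecidableRel G.Adj]
    (hconn : G.Connected) (hT2 : ¬ ContainsSub netT2 G)
    (hcyc : ∀ k : ℕ, 4 ≤ k → ¬ ContainsSub (SimpleGraph.cycleGraph k) G) :
    (∀ u v w x : V, G.Adj u v → G.Adj u w → G.Adj v w → G.Adj u x → G.Adj v x →
      w = x) ∧
    (∀ u v w : V, G.Adj u v → G.Adj v w → G.Adj u w →
      G.degree u = 2 ∨ G.degree v = 2 ∨ G.degree w = 2) := by
  have part1 : ∀ u v w x : V, G.Adj u v → G.Adj u w → G.Adj v w → G.Adj u x →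
      G.Adj v x → w = x := by
    intro u v w x huv huw hvw hux hvx
    by_contra hwx
    apply hcyc 4 le_rfl
    have n1 := huv.ne; have n2 := huw.ne; have n3 := hvw.ne
    have n4 := hux.ne; have n5 := hvx.ne
    have n1' := huv.ne'; have n2' := huw.ne'; have n3' := hvw.ne'
    have n4' := hux.ne'; have n5' := hvx.ne'
    refine ⟨![u, w, v, x], inj4 u w v x n2 n1 n4 n3' hwx n5, ?_⟩
    · intro a b hab
      rw [SimpleGraph.cycleGraph_adj] at hab
      fin_cases a <;> fin_cases b <;>
        simp only [Matrix.cons_val_zero, Matrix.cons_val_one, Matrix.head_cons,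
          Matrix.cons_val_succ] <;>
        first
          | (exfalso; revert hab; decide)
          | exact huv | exact huv.symm | exact huw | exact huw.symm | exact hvw
          | exact hvw.symm | exact hux | exact hux.symm | exact hvx | exact hvx.symm
  refine ⟨part1, ?_⟩
  intro u v w huv hvw huw
  by_contra h
  push_neg at h
  obtain ⟨hu, hv, hw⟩ := h
  obtain ⟨x, hux, hxv, hxw⟩ := extra_nbr G huv huw hvw.ne hu
  obtain ⟨y, hvy, hyu, hyw⟩ := extra_nbr G huv.symm hvw huw.ne hv
  obtain ⟨z, hwz, hzu, hzv⟩ := extra_nbr G huw.symm hvw.symm huv.ne hw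
  have hxu : x ≠ u := hux.ne'
  have hyv : y ≠ v := hvy.ne'
  have hzw : z ≠ w := hwz.ne'
  have hxy : x ≠ y := by
    rintro rfl
    exact hxw (part1 u v w x huv huw hvw hux hvy).symm
  have hxz : x ≠ z := by
    rintro rfl
    exact hxv (part1 u w v x huw huv hvw.symm hux hwz).symm
  have hyz : y ≠ z := by
    rintro rfl
    exact hyu (part1 v w u y hvw huv.symm huw.symm hvy hwz).symm
  have n1 := huv.ne; have n2 := huw.ne; have n3 := hvw.ne
  apply hT2
  refine ⟨![u, v, w, x, y, z], inj6 u v w x y z n1 n2 hxu.symm (fun h => hyu h.symm)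
    (fun h => hzu h.symm) n3 (fun h => hxv h.symm) hyv.symm (fun h => hzv h.symm)
    (fun h => hxw h.symm) (fun h => hyw h.symm) hzw.symm hxy hxz hyz, ?_⟩
  · intro a b hab
    fin_cases a <;> fin_cases b <;>
      simp only [netT2, SimpleGraph.fromEdgeSet_adj, Set.mem_insert_iff,
        Set.mem_singleton_iff, Sym2.eq, Sym2.rel_iff', Prod.mk.injEq,
        Prod.swap_prod_mk, ne_eq] at hab <;>
      simp only [Matrix.cons_val_zero, Matrix.cons_val_one, Matrix.head_cons,
        Matrix.cons_val_succ] <;>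
      first
        | (exfalso; revert hab; decide)
        | exact huv | exact huv.symm | exact hvw | exact hvw.symm | exact huw
        | exact huw.symm | exact hux | exact hux.symm | exact hvy | exact hvy.symm
        | exact hwz | exact hwz.symm
end

section
/- A graph G has a degree complete labeling if and only if every connected component of G has a degree complete labeling. -/
lemma exists_ordered_labeling {V : Type*} [Fintype V] (h : V → ℕ)
    (hinj : Function.Injective h) :
    ∃ f : V ≃ Fin (Fintype.card V), ∀ x y, f x < f y ↔ h x < h y := by
  classical
  set T : Finset ℕ := Finset.univ.image h with hT
  have hTcard : T.card = Fintype.card V := by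
    rw [hT, Finset.card_image_of_injective _ hinj, Finset.card_univ]
  let e1 : V ≃ T := Equiv.ofBijective (fun v => ⟨h v, by simp [hT]⟩)
    ((Fintype.bijective_iff_injective_and_card _).2
      ⟨fun a b hab => hinj (by simpa using hab), by simp [Fintype.card_coe, hTcard]⟩)
  let oi := T.orderIsoOfFin hTcard
  refine ⟨e1.trans oi.symm.toEquiv, fun x y => ?_⟩
  simp only [Equiv.trans_apply]
  show oi.symm (e1 x) < oi.symm (e1 y) ↔ _
  rw [oi.symm.lt_iff_lt]
  exact Iff.rfl

lemma backward {V : Type*} [Fintype V] (G : SimpleGraph V)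
    (hc : ∀ c : G.ConnectedComponent, HasDCLabeling (G.induce c.supp)) :
    HasDCLabeling G := by
  classical
  choose m F hF using hc
  haveI : Finite G.ConnectedComponent := by
    unfold SimpleGraph.ConnectedComponent; infer_instance
  obtain ⟨e, he⟩ := exists_injective_nat G.ConnectedComponent
  set N : ℕ := Fintype.card V + 1 with hN
  -- a bound on labels within components
  have hbound : ∀ (c : G.ConnectedComponent) (x : c.supp), (F c x : ℕ) < N := by
    intro c x
    haveI : Fintype c.supp := (Set.toFinite _).fintype
    have h1 : m c = Fintype.card c.supp := by
      simpa using (Fintype.card_congr (F c)).symm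
    have h2 : Fintype.card c.supp ≤ Fintype.card V :=
      Fintype.card_le_of_injective Subtype.val Subtype.val_injective
    have := (F c x).2
    omega
  set h : V → ℕ := fun v =>
    e (G.connectedComponentMk v) * N +
      (F (G.connectedComponentMk v) ⟨v, ((G.connectedComponentMk v).mem_supp_iff v).2 rfl⟩ : ℕ)
    with hh
  have gsubst : ∀ (x : V) (c : G.ConnectedComponent) (hxc : G.connectedComponentMk x = c),
      h x = e c * N + (F c ⟨x, (c.mem_supp_iff x).2 hxc⟩ : ℕ) := by
    intro x c hxc
    subst hxc
    rfl
  have hNpos : 0 < N := by omega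
  -- injectivity
  have hinj : Function.Injective h := by
    intro x y hxy
    have hx := gsubst x _ rfl
    have hy := gsubst y _ rfl
    have hbx := hbound _ (⟨x, ((G.connectedComponentMk x).mem_supp_iff x).2 rfl⟩)
    have hby := hbound _ (⟨y, ((G.connectedComponentMk y).mem_supp_iff y).2 rfl⟩)
    have hdiv : e (G.connectedComponentMk x) = e (G.connectedComponentMk y) := by
      have dx : h x / N = e (G.connectedComponentMk x) := by
        rw [hx, mul_comm, Nat.mul_add_div hNpos, Nat.div_eq_of_lt hbx, Nat.add_zero]
      have dy : h y / N = e (G.connectedComponentMk y) := by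
        rw [hy, mul_comm, Nat.mul_add_div hNpos, Nat.div_eq_of_lt hby, Nat.add_zero]
      rw [← dx, ← dy, hxy]
    have hcc : G.connectedComponentMk y = G.connectedComponentMk x := (he hdiv).symm
    have hy' := gsubst y _ hcc
    rw [hx, hy'] at hxy
    have := Nat.add_left_cancel hxy
    have hfe : F (G.connectedComponentMk x) ⟨x, _⟩ = F (G.connectedComponentMk x) ⟨y, _⟩ :=
      Fin.ext this
    have := (F (G.connectedComponentMk x)).injective hfe
    exact congrArg Subtype.val this
  -- order within a component
  have hlt : ∀ (c : G.ConnectedComponent) (x y : c.supp),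
      h x.1 < h y.1 ↔ F c x < F c y := by
    rintro c ⟨x, hx⟩ ⟨y, hy⟩
    rw [gsubst x c ((c.mem_supp_iff x).1 hx), gsubst y c ((c.mem_supp_iff y).1 hy)]
    constructor
    · intro hlt'
      exact Fin.lt_def.2 (by omega)
    · intro hlt'
      have := Fin.lt_def.1 hlt'
      omega
  -- convexity of components in the order
  have hconv : ∀ x y z : V, h x < h y → h y < h z →
      G.connectedComponentMk x = G.connectedComponentMk z →
      G.connectedComponentMk y = G.connectedComponentMk x := by
    intro x y z hxy hyz hxz
    apply he
    rw [hxz]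
    have hx := gsubst x _ hxz
    have hy := gsubst y _ rfl
    have hz := gsubst z _ rfl
    have hbx := hbound _ (⟨x, ((G.connectedComponentMk z).mem_supp_iff x).2 hxz⟩)
    have hby := hbound _ (⟨y, ((G.connectedComponentMk y).mem_supp_iff y).2 rfl⟩)
    have hbz := hbound _ (⟨z, ((G.connectedComponentMk z).mem_supp_iff z).2 rfl⟩)
    set a := e (G.connectedComponentMk z)
    set b := e (G.connectedComponentMk y)
    have hab : b ≤ a := by
      have h1 : b * N < (a + 1) * N := by
        have : h y < a * N + N := by omega
        calc b * N ≤ h y := by omega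
        _ < a * N + N := this
        _ = (a + 1) * N := by ring
      have := Nat.lt_of_mul_lt_mul_right h1
      omega
    have hba : a ≤ b := by
      have h1 : a * N < (b + 1) * N := by
        calc a * N ≤ h x := by omega
        _ < h y := hxy
        _ < b * N + N := by omega
        _ = (b + 1) * N := by ring
      have := Nat.lt_of_mul_lt_mul_right h1
      omega
    omega
  obtain ⟨g, hg⟩ := exists_ordered_labeling h hinj
  refine ⟨_, g, ?_⟩
  rintro ⟨v1, v2, v3, v4, h12, h23, h34, hadj⟩
  rw [hg] at h12 h23 h34
  rcases hadj with ⟨ha, hb⟩ | ⟨ha, hb⟩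
  · have c13 : G.connectedComponentMk v1 = G.connectedComponentMk v3 :=
      SimpleGraph.ConnectedComponent.eq.2 ha.reachable
    have c24 : G.connectedComponentMk v2 = G.connectedComponentMk v4 :=
      SimpleGraph.ConnectedComponent.eq.2 hb.reachable
    have c21 : G.connectedComponentMk v2 = G.connectedComponentMk v1 :=
      hconv v1 v2 v3 h12 h23 c13
    have c32 : G.connectedComponentMk v3 = G.connectedComponentMk v2 :=
      hconv v2 v3 v4 h23 h34 c24
    set c := G.connectedComponentMk v1 with hcdef
    have m1 : v1 ∈ c.supp := (c.mem_supp_iff v1).2 rfl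
    have m2 : v2 ∈ c.supp := (c.mem_supp_iff v2).2 c21
    have m3 : v3 ∈ c.supp := (c.mem_supp_iff v3).2 (c32.trans c21)
    have m4 : v4 ∈ c.supp := (c.mem_supp_iff v4).2 (c24.symm.trans c21)
    exact hF c ⟨⟨v1, m1⟩, ⟨v2, m2⟩, ⟨v3, m3⟩, ⟨v4, m4⟩,
      (hlt c _ _).1 h12, (hlt c _ _).1 h23, (hlt c _ _).1 h34, Or.inl ⟨ha, hb⟩⟩
  · have c14 : G.connectedComponentMk v1 = G.connectedComponentMk v4 :=
      SimpleGraph.ConnectedComponent.eq.2 ha.reachable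
    have c23 : G.connectedComponentMk v2 = G.connectedComponentMk v3 :=
      SimpleGraph.ConnectedComponent.eq.2 hb.reachable
    have c21 : G.connectedComponentMk v2 = G.connectedComponentMk v1 :=
      hconv v1 v2 v4 h12 (h23.trans h34) c14
    have c31 : G.connectedComponentMk v3 = G.connectedComponentMk v1 :=
      hconv v1 v3 v4 (h12.trans h23) h34 c14
    set c := G.connectedComponentMk v1 with hcdef
    have m1 : v1 ∈ c.supp := (c.mem_supp_iff v1).2 rfl
    have m2 : v2 ∈ c.supp := (c.mem_supp_iff v2).2 c21
    have m3 : v3 ∈ c.supp := (c.mem_supp_iff v3).2 c31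
    have m4 : v4 ∈ c.supp := (c.mem_supp_iff v4).2 (c14.symm)
    exact hF c ⟨⟨v1, m1⟩, ⟨v2, m2⟩, ⟨v3, m3⟩, ⟨v4, m4⟩,
      (hlt c _ _).1 h12, (hlt c _ _).1 h23, (hlt c _ _).1 h34, Or.inr ⟨ha, hb⟩⟩

lemma forward {V : Type*} [Fintype V] (G : SimpleGraph V) {n : ℕ} (f : V ≃ Fin n)
    (hf : ¬ HasForbidden G f) (S : Set V) : HasDCLabeling (G.induce S) := by
  classical
  haveI : Fintype S := (Set.toFinite S).fintype
  obtain ⟨g, hg⟩ := exists_ordered_labeling (fun x : S => (f x.1 : ℕ))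
    (fun a b hab => Subtype.ext (f.injective (Fin.ext hab)))
  refine ⟨_, g, ?_⟩
  rintro ⟨v1, v2, v3, v4, h12, h23, h34, hadj⟩
  apply hf
  refine ⟨v1.1, v2.1, v3.1, v4.1, ?_, ?_, ?_, ?_⟩
  · exact (hg v1 v2).mp h12
  · exact (hg v2 v3).mp h23
  · exact (hg v3 v4).mp h34
  · rcases hadj with ⟨ha, hb⟩ | ⟨ha, hb⟩
    · exact Or.inl ⟨ha, hb⟩
    · exact Or.inr ⟨ha, hb⟩

/-- a graph has a degree complete labeling iff every connected component
has a degree complete labeling. -/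
theorem hasDCLabeling_iff_components {V : Type*} [Fintype V] (G : SimpleGraph V) :
    HasDCLabeling G ↔
      ∀ c : G.ConnectedComponent, HasDCLabeling (G.induce c.supp) := by
  constructor
  · rintro ⟨n, f, hf⟩ c
    exact forward G f hf c.supp
  · exact backward G
end

section
/- Let G be a caterpillar with spine path v1,...,v_{p+1}, and label G by a bijection f : V(G) → {1,...,n} such that f(v1) < f(v2) < ... < f(v_{p+1}), every leaf x not on the spine with unique neighbor v_i satisfies f(v_i) < f(x) < f(v_{i+1}) (or f(x) > f(v_{p+1}) if i = p+1). Then the labeled graph contains no configuration H1 or H2. -/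
/-- let `G` be a caterpillar with spine path `v 0, …, v p`, and let `f`
be a bijective labeling which is strictly increasing along the spine and places the
label of each off-spine leaf attached at `v i` strictly between the label of `v i` and
the labels of all later spine vertices.  Then the labeled graph contains no forbidden
configuration `H1` or `H2`. -/
theorem caterpillar_labeling_no_forbidden {V : Type*} {p n : ℕ}
    (G : SimpleGraph V) (v : Fin (p + 1) → V) (hv : Function.Injective v)
    (hspine : ∀ i : Fin p, G.Adj (v i.castSucc) (v i.succ))
    (hspine_ind : ∀ i j : Fin (p + 1), G.Adj (v i) (v j) →
      i.val + 1 = j.val ∨ j.val + 1 = i.val)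
    (hleaf : ∀ x : V, x ∉ Set.range v →
      ∃ i : Fin (p + 1), G.Adj x (v i) ∧ ∀ y : V, G.Adj x y → y = v i)
    (f : V ≃ Fin n)
    (hmono : StrictMono (fun i : Fin (p + 1) => f (v i)))
    (hlabel : ∀ x : V, x ∉ Set.range v → ∀ i : Fin (p + 1), G.Adj x (v i) →
      f (v i) < f x ∧ ∀ j : Fin (p + 1), i < j → f x < f (v j)) :
    ¬ HasForbidden G f := by
  -- Structure lemma: for any edge a–c with f a < f c, a is a spine vertex v i,
  -- and f c ≤ f (v j) for every j > i.
  have key : ∀ a c : V, G.Adj a c → f a < f c →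
      ∃ i : Fin (p + 1), a = v i ∧ ∀ j : Fin (p + 1), i < j → f c ≤ f (v j) := by
    intro a c hadj hfc
    by_cases ha : a ∈ Set.range v
    · obtain ⟨i, rfl⟩ := ha
      refine ⟨i, rfl, ?_⟩
      by_cases hc : c ∈ Set.range v
      · obtain ⟨j, rfl⟩ := hc
        rcases hspine_ind i j hadj with hij | hji
        · intro k hk
          exact hmono.monotone (by omega : j ≤ k)
        · exact absurd hfc (not_lt.mpr (le_of_lt (hmono (by omega : j < i))))
      · obtain ⟨i', hadj', huniq⟩ := hleaf c hc
        have hi : v i = v i' := huniq (v i) hadj.symm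
        have : i = i' := hv hi
        subst this
        intro j hj
        exact le_of_lt ((hlabel c hc i hadj').2 j hj)
    · obtain ⟨i, hadj', huniq⟩ := hleaf a ha
      have hc : c = v i := huniq c hadj
      subst hc
      exact absurd hfc (not_lt.mpr (le_of_lt (hlabel a ha i hadj').1))
  rintro ⟨w1, w2, w3, w4, h12, h23, h34, hcase⟩
  rcases hcase with ⟨h13, h24⟩ | ⟨h14, h23'⟩
  · obtain ⟨i, rfl, hP1⟩ := key w1 w3 h13 (h12.trans h23)
    obtain ⟨k, rfl, hP2⟩ := key w2 w4 h24 (h23.trans h34)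
    have hik : i < k := hmono.lt_iff_lt.mp h12
    exact absurd (hP1 k hik) (not_le.mpr h23)
  · obtain ⟨i, rfl, hP1⟩ := key w1 w4 h14 ((h12.trans h23).trans h34)
    obtain ⟨k, rfl, hP2⟩ := key w2 w3 h23' h23
    have hik : i < k := hmono.lt_iff_lt.mp h12
    exact absurd (hP1 k hik) (not_le.mpr (h23.trans h34))
end

section
/- If G is a labeled graph on {1,...,n} containing a configuration H2 (labels k1<k2<k3<k4 with edges {k1,k4} and {k2,k3}), then G is not degree complete: there exists a nonnegative integer vector s satisfying s_G^l ≼ s ≼ s_G^r and 0 ≤ s_i ≤ d_G(i) for all i, which is not the out-degree vector of any orientation of G. -/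
/-!
Orient every edge of `G` away from `k1`, then away from `k4`, and otherwise towards the smaller
label. Moving one unit of out-degree from `k3` (which keeps its arc to `k2`) to `k4` gives a
vector `s` with `s k1 = d(k1)` and `s k4 = d(k4)`; no orientation realizes it, since the edge
`k1k4` leaves only one of its ends. The `k`-th partial sum of the out-degrees of an orientation
is that of `s_G^l` plus the number of arcs leaving the first `k` vertices, which is at most the
same count for `s_G^r`. The arc `k1 → k4` crosses every cut between `k3` and `k4`, so `s` still
lies between `s_G^l` and `s_G^r`.
-/

section

open Finset

variable {n : ℕ}

theorem partialSum_add (s t : Fin n → ℕ) (k : ℕ) :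
    partialSum (s + t) k = partialSum s k + partialSum t k :=
  sum_add_distrib

theorem partialSum_single (a : Fin n) (k : ℕ) :
    partialSum (Pi.single a 1) k = if a.val < k then 1 else 0 := by
  simp [partialSum, Pi.single_apply]

def arcsWithin (D : Fin n → Fin n → Bool) (k : ℕ) : ℕ :=
  ∑ u with u.val < k, ∑ v with v.val < k, if D u v then 1 else 0

def arcsLeaving (D : Fin n → Fin n → Bool) (k : ℕ) : ℕ :=
  ∑ u with u.val < k, ∑ v with ¬ v.val < k, if D u v then 1 else 0

theorem partialSum_outDeg (D : Fin n → Fin n → Bool) (k : ℕ) :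
    partialSum (outDeg D) k = arcsWithin D k + arcsLeaving D k := by
  simp only [partialSum, outDeg, arcsWithin, arcsLeaving, card_filter,
    ← sum_add_distrib, sum_filter_add_sum_filter_not]

theorem arcsLeaving_pos {D : Fin n → Fin n → Bool} {u v : Fin n} {k : ℕ} (huv : D u v = true)
    (hu : u.val < k) (hv : k ≤ v.val) : 0 < arcsLeaving D k := by
  refine lt_of_lt_of_le ?_ (single_le_sum (f := fun u => ∑ v with ¬ v.val < k,
    if D u v then 1 else 0) (fun _ _ => Nat.zero_le _) (by simpa using hu))
  refine lt_of_lt_of_le ?_ (single_le_sum (f := fun v => if D u v then 1 else 0)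
    (fun _ _ => Nat.zero_le _) (by simpa using hv))
  simp [huv]

theorem arcsLeaving_eq_zero_of_le (D : Fin n → Fin n → Bool) {k : ℕ} (hk : n ≤ k) :
    arcsLeaving D k = 0 := by
  refine sum_eq_zero fun u _ => sum_eq_zero fun v hv => ?_
  simp only [mem_filter, mem_univ, true_and] at hv
  omega

theorem outDeg_pos {D : Fin n → Fin n → Bool} {u v : Fin n} (huv : D u v = true) :
    0 < outDeg D u :=
  card_pos.mpr ⟨v, by simpa using huv⟩

variable {G : SimpleGraph (Fin n)} {D : Fin n → Fin n → Bool}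

theorem IsOrientation.adj (hD : IsOrientation G D) {u v : Fin n} (huv : D u v = true) :
    G.Adj u v := by
  by_contra h
  simp [(hD u v).2 h] at huv

variable [DecidableRel G.Adj]

namespace IsOrientation

theorem ite_add_ite_swap (hD : IsOrientation G D) (u v : Fin n) :
    ((if D u v then 1 else 0) + if D v u then 1 else 0 : ℕ) = if G.Adj u v then 1 else 0 := by
  by_cases h : G.Adj u v
  · rw [(hD u v).1 h]
    cases D v u <;> simp [h]
  · simp [(hD u v).2 h, (hD v u).2 (fun h' => h h'.symm), h]

theorem two_mul_arcsWithin (hD : IsOrientation G D) (k : ℕ) :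
    2 * arcsWithin D k = ∑ u with u.val < k, ∑ v with v.val < k, if G.Adj u v then 1 else 0 := by
  rw [two_mul]
  nth_rewrite 2 [arcsWithin]
  rw [sum_comm, arcsWithin, ← sum_add_distrib]
  refine sum_congr rfl fun u _ => ?_
  rw [← sum_add_distrib]
  exact sum_congr rfl fun v _ => ite_add_ite_swap hD u v

theorem arcsWithin_eq {D' : Fin n → Fin n → Bool} (hD : IsOrientation G D)
    (hD' : IsOrientation G D') (k : ℕ) : arcsWithin D k = arcsWithin D' k := by
  have := two_mul_arcsWithin hD k
  have := two_mul_arcsWithin hD' k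
  omega

end IsOrientation

variable (G) in
/-- Edges point from higher to lower rank: `r = id` gives the orientation defining `s_G^l`, and
`r = OrderDual.toDual` the one defining `s_G^r`. -/
def rankOrientation {α : Type*} [LinearOrder α] (r : Fin n → α) : Fin n → Fin n → Bool :=
  fun u v => decide (G.Adj u v ∧ r v < r u)

theorem isOrientation_rankOrientation {α : Type*} [LinearOrder α] {r : Fin n → α}
    (hr : Function.Injective r) : IsOrientation G (rankOrientation G r) := by
  intro u v
  refine ⟨fun h => ?_, fun h => by simp [rankOrientation, h]⟩
  have : r u ≠ r v := hr.ne (G.ne_of_adj h)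
  rcases this.lt_or_gt with huv | huv <;> simp [rankOrientation, h, h.symm, huv, huv.not_gt]

theorem arcsLeaving_rankOrientation_id (k : ℕ) : arcsLeaving (rankOrientation G id) k = 0 := by
  refine sum_eq_zero fun u hu => sum_eq_zero fun v hv => ?_
  simp only [mem_filter, mem_univ, true_and] at hu hv
  have : ¬ v < u := by rw [Fin.lt_def]; omega
  simp [rankOrientation, this]

theorem partialSum_outDeg_eq (hD : IsOrientation G D) (k : ℕ) :
    partialSum (outDeg D) k = partialSum (outDeg (rankOrientation G id)) k + arcsLeaving D k := by
  rw [partialSum_outDeg, partialSum_outDeg, arcsLeaving_rankOrientation_id, add_zero,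
    IsOrientation.arcsWithin_eq hD (isOrientation_rankOrientation Function.injective_id)]

theorem arcsLeaving_le (hD : IsOrientation G D) (k : ℕ) :
    arcsLeaving D k ≤ arcsLeaving (rankOrientation G OrderDual.toDual) k := by
  refine sum_le_sum fun u hu => sum_le_sum fun v hv => ?_
  simp only [mem_filter, mem_univ, true_and] at hu hv
  have huv : u < v := by rw [Fin.lt_def]; omega
  by_cases h : D u v
  · simp [h, rankOrientation, IsOrientation.adj hD h, huv]
  · simp [h]

/-- Moving one unit of out-degree from `a` forward to `b` stays between `s_G^l` and `s_G^r`
as long as every cut between `a` and `b` is crossed forward by an arc. -/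
theorem preceq_of_add_single_eq (hD : IsOrientation G D) {a b : Fin n} (hab : a < b)
    (hcut : ∀ k : ℕ, a.val < k → k ≤ b.val → 0 < arcsLeaving D k) {s : Fin n → ℕ}
    (hs : s + Pi.single a 1 = outDeg D + Pi.single b 1) :
    Preceq (outDeg (rankOrientation G id)) s ∧
      Preceq s (outDeg (rankOrientation G OrderDual.toDual)) := by
  have hsum (k : ℕ) : partialSum s k + (if a.val < k then 1 else 0) =
      partialSum (outDeg (rankOrientation G id)) k + arcsLeaving D k +
        if b.val < k then 1 else 0 := by
    rw [← partialSum_single, ← partialSum_add, hs, partialSum_add, partialSum_single,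
      partialSum_outDeg_eq hD]
  have hright (k : ℕ) := partialSum_outDeg_eq
    (isOrientation_rankOrientation (G := G) OrderDual.toDual.injective) k
  have hab' : a.val < b.val := hab
  refine ⟨⟨fun k _ => ?_, ?_⟩, ⟨fun k _ => ?_, ?_⟩⟩
  · have := hsum k
    by_cases hmid : a.val < k ∧ k ≤ b.val
    · have := hcut k hmid.1 hmid.2
      split_ifs at * <;> omega
    · split_ifs at * <;> omega
  · have := hsum n
    simp only [a.isLt, b.isLt, if_true, arcsLeaving_eq_zero_of_le D le_rfl] at this
    omega
  · have := hsum k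
    have := hright k
    have := arcsLeaving_le hD k
    split_ifs at * <;> omega
  · have := hsum n
    have := hright n
    simp only [a.isLt, b.isLt, if_true, arcsLeaving_eq_zero_of_le _ le_rfl] at *
    omega

theorem outDeg_le_degree (hD : IsOrientation G D) (u : Fin n) : outDeg D u ≤ G.degree u := by
  refine card_le_card fun w hw => ?_
  simp only [mem_filter, mem_univ, true_and] at hw
  exact (G.mem_neighborFinset u w).mpr (IsOrientation.adj hD hw)

theorem outDeg_lt_degree (hD : IsOrientation G D) {u v : Fin n} (huv : G.Adj u v)
    (h : D u v = false) : outDeg D u < G.degree u := by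
  refine card_lt_card ⟨fun w hw => ?_, fun hsub => ?_⟩
  · simp only [mem_filter, mem_univ, true_and] at hw
    exact (G.mem_neighborFinset u w).mpr (IsOrientation.adj hD hw)
  · simpa [h] using hsub ((G.mem_neighborFinset u v).mpr huv)

theorem not_exists_outDeg_eq_of_adj {s : Fin n → ℕ} {u v : Fin n} (huv : G.Adj u v)
    (hu : s u = G.degree u) (hv : s v = G.degree v) :
    ¬ ∃ D, IsOrientation G D ∧ ∀ i, outDeg D i = s i := by
  rintro ⟨D, hD, hs⟩
  cases h : D u v
  · exact (outDeg_lt_degree hD huv h).ne ((hs u).trans hu)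
  · have h' : D v u = false := by simpa [h] using ((hD v u).1 huv.symm).symm
    exact (outDeg_lt_degree hD huv.symm h').ne ((hs v).trans hv)

def priorityRank (a b : Fin n) (v : Fin n) : ℕ :=
  if v = a then n + 1 else if v = b then n else v.val

theorem priorityRank_injective (a b : Fin n) : Function.Injective (priorityRank a b) := by
  intro u v h
  simp only [priorityRank] at h
  split_ifs at h <;> omega

theorem outDeg_rankOrientation {α : Type*} [LinearOrder α] (r : Fin n → α) (u : Fin n) :
    outDeg (rankOrientation G r) u = #{w ∈ G.neighborFinset u | r w < r u} := by
  simp only [outDeg, rankOrientation, decide_eq_true_eq]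
  congr 1
  ext w
  simp

theorem outDeg_rankOrientation_priorityRank_left (a b : Fin n) :
    outDeg (rankOrientation G (priorityRank a b)) a = G.degree a := by
  rw [outDeg_rankOrientation, filter_true_of_mem, SimpleGraph.card_neighborFinset_eq_degree]
  intro w hw
  have hwa : w ≠ a := (G.ne_of_adj ((G.mem_neighborFinset a w).mp hw)).symm
  simp only [priorityRank, hwa, if_true, if_false]
  split_ifs <;> omega

theorem outDeg_rankOrientation_priorityRank_right_add_one {a b : Fin n} (hab : G.Adj a b) :
    outDeg (rankOrientation G (priorityRank a b)) b + 1 = G.degree b := by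
  have hba : b ≠ a := (G.ne_of_adj hab).symm
  have : {w ∈ G.neighborFinset b | priorityRank a b w < priorityRank a b b} =
      (G.neighborFinset b).erase a := by
    ext w
    simp only [mem_filter, mem_erase, priorityRank, hba, if_true, if_false]
    constructor
    · rintro ⟨hw, hlt⟩
      exact ⟨fun h => by simp [h] at hlt, hw⟩
    · rintro ⟨hwa, hw⟩
      have hwb : w ≠ b := (G.ne_of_adj ((G.mem_neighborFinset b w).mp hw)).symm
      simp [hwa, hwb, hw]
  rw [outDeg_rankOrientation, this, card_erase_add_one ((G.mem_neighborFinset b a).mpr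
    hab.symm), SimpleGraph.card_neighborFinset_eq_degree]

end

/-- if a labeled graph `G` on `{1,…,n}` contains a configuration `H2`
(labels `k1<k2<k3<k4` with edges `{k1,k4}` and `{k2,k3}`), then `G` is not degree
complete: some vector `s` with `s_G^l ≼ s ≼ s_G^r` and `s i ≤ d_G(i)` is not the
out-degree vector of any orientation of `G`. -/
theorem not_degreeComplete_of_H2 {n : ℕ} (G : SimpleGraph (Fin n)) [DecidableRel G.Adj]
    (h : ∃ k1 k2 k3 k4 : Fin n, k1 < k2 ∧ k2 < k3 ∧ k3 < k4 ∧
      G.Adj k1 k4 ∧ G.Adj k2 k3) :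
    ∃ s : Fin n → ℕ,
      Preceq (outDeg (fun u v => decide (G.Adj u v ∧ v < u))) s ∧
      Preceq s (outDeg (fun u v => decide (G.Adj u v ∧ u < v))) ∧
      (∀ i : Fin n, s i ≤ G.degree i) ∧
      ¬ ∃ D : Fin n → Fin n → Bool, IsOrientation G D ∧ ∀ i : Fin n, outDeg D i = s i := by
  obtain ⟨k1, k2, k3, k4, h12, h23, h34, h14, h23'⟩ := h
  set D := rankOrientation G (priorityRank k1 k4)
  have hD : IsOrientation G D := isOrientation_rankOrientation (priorityRank_injective k1 k4)
  have hD14 : D k1 k4 = true := by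
    simp [D, rankOrientation, priorityRank, h14, h14.ne']
  have hD32 : D k3 k2 = true := by
    simp [D, rankOrientation, priorityRank, h23'.symm, h23, h12.ne', (h12.trans h23).ne',
      (h23.trans h34).ne, h34.ne]
  set s := outDeg D + Pi.single k4 1 - Pi.single k3 1
  have hs : s + Pi.single k3 1 = outDeg D + Pi.single k4 1 := by
    have := outDeg_pos hD32
    funext i
    simp only [s, Pi.add_apply, Pi.sub_apply, Pi.single_apply]
    split_ifs with h3 h4 h4
    · exact absurd (h3.symm.trans h4) h34.ne'
    all_goals subst_vars; omega
  obtain ⟨hl, hr⟩ := preceq_of_add_single_eq hD h34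
    (fun k hk3 hk4 => arcsLeaving_pos hD14 (by omega) hk4) hs
  have hs1 : s k1 = G.degree k1 := by
    simp [s, (h12.trans h23).ne, (h12.trans (h23.trans h34)).ne, outDeg_rankOrientation_priorityRank_left, D]
  have hs4 : s k4 = G.degree k4 := by
    simp [s, h34.ne', outDeg_rankOrientation_priorityRank_right_add_one h14, D]
  refine ⟨s, hl, hr, fun i => ?_, not_exists_outDeg_eq_of_adj h14 hs1 hs4⟩
  by_cases hi : i = k4
  · exact hi ▸ hs4.le
  · simpa [s, hi] using (Nat.sub_le _ _).trans (outDeg_le_degree hD i)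
end

section
/- Let G be a graph in which every connected component is either a single vertex, a single edge, a path, or a triangle. Then G has a degree complete labeling. -/
private lemma aux_le_of_le {N a b a' b' : ℕ} (hb : b' < N) (hle : N * a + b ≤ N * a' + b') :
    a ≤ a' := by
  by_contra hlt
  push_neg at hlt
  have h1 : a' + 1 ≤ a := hlt
  have : N * (a' + 1) ≤ N * a := Nat.mul_le_mul_left N h1
  rw [Nat.mul_add, Nat.mul_one] at this
  omega

/-- if every connected component of `G` is a single vertex, a single
edge, a path, or a triangle, then `G` has a degree complete labeling. -/
theorem hasDCLabeling_of_components_path_or_triangle {V : Type*} [Fintype V]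
    (G : SimpleGraph V)
    (h : ∀ c : G.ConnectedComponent,
      (∃ m : ℕ, Nonempty ((G.induce c.supp) ≃g SimpleGraph.pathGraph m)) ∨
      Nonempty ((G.induce c.supp) ≃g (⊤ : SimpleGraph (Fin 3)))) :
    HasDCLabeling G := by
  classical
  set N : ℕ := Fintype.card V + 3 with hN
  -- for each component, a "position" function
  have key : ∀ c : G.ConnectedComponent, ∃ ρ : c.supp → ℕ,
      Function.Injective ρ ∧ (∀ x, ρ x < N) ∧
      ((∀ u v : c.supp, G.Adj u v → ρ u = ρ v + 1 ∨ ρ v = ρ u + 1) ∨ (∀ x, ρ x < 3)) := by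
    intro c
    rcases h c with ⟨m, he⟩ | he <;> obtain ⟨e⟩ := he
    · refine ⟨fun x => (e x).val, ?_, ?_, Or.inl ?_⟩
      · intro x y hxy
        exact e.toEquiv.injective (Fin.ext hxy)
      · intro x
        show (e x).val < N
        letI := Fintype.ofFinite c.supp
        have hm : m = Fintype.card c.supp := by
          have := Fintype.card_congr e.toEquiv
          simpa using this.symm
        have hcard : Fintype.card c.supp ≤ Fintype.card V :=
          Fintype.card_le_of_injective (fun x : c.supp => (x : V)) Subtype.val_injective
        have := (e x).isLt
        omega
      · intro u v huv
        show (e u).val = (e v).val + 1 ∨ (e v).val = (e u).val + 1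
        have hadj : (G.induce c.supp).Adj u v := by
          simpa using huv
        have := e.map_adj_iff.mpr hadj
        rw [SimpleGraph.pathGraph_adj] at this
        omega
    · refine ⟨fun x => (e x).val, ?_, ?_, Or.inr ?_⟩
      · intro x y hxy
        exact e.toEquiv.injective (Fin.ext hxy)
      · intro x
        show (e x).val < N
        have := (e x).isLt
        omega
      · intro x
        show (e x).val < 3
        exact (e x).isLt
  choose ρ hinj hbound hprop using key
  letI : Fintype G.ConnectedComponent := Fintype.ofFinite _
  set cEnum : G.ConnectedComponent ≃ Fin (Fintype.card G.ConnectedComponent) :=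
    Fintype.equivFin _ with hcE
  have memself : ∀ v : V, v ∈ (G.connectedComponentMk v).supp := by
    intro v
    rw [SimpleGraph.ConnectedComponent.mem_supp_iff]
  set φ : V → ℕ := fun v =>
    N * (cEnum (G.connectedComponentMk v)).val + ρ (G.connectedComponentMk v) ⟨v, memself v⟩
    with hφ
  have phi_eq : ∀ (c : G.ConnectedComponent) (v : V) (hv : v ∈ c.supp),
      φ v = N * (cEnum c).val + ρ c ⟨v, hv⟩ := by
    intro c v hv
    have hc : G.connectedComponentMk v = c :=
      (SimpleGraph.ConnectedComponent.mem_supp_iff c v).mp hv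
    subst hc
    rfl
  have hφinj : Function.Injective φ := by
    intro u v huv
    rw [hφ] at huv
    have h1 := hbound (G.connectedComponentMk u) ⟨u, memself u⟩
    have h2 := hbound (G.connectedComponentMk v) ⟨v, memself v⟩
    have ha : (cEnum (G.connectedComponentMk u)).val = (cEnum (G.connectedComponentMk v)).val :=
      le_antisymm (aux_le_of_le h2 huv.le) (aux_le_of_le h1 huv.ge)
    have hc : G.connectedComponentMk u = G.connectedComponentMk v :=
      cEnum.injective (Fin.ext ha)
    have hv' : v ∈ (G.connectedComponentMk u).supp := by
      rw [hc]; exact memself v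
    have e1 := phi_eq (G.connectedComponentMk u) u (memself u)
    have e2 := phi_eq (G.connectedComponentMk u) v hv'
    rw [hφ] at e1 e2
    have hr : ρ (G.connectedComponentMk u) ⟨u, memself u⟩
        = ρ (G.connectedComponentMk u) ⟨v, hv'⟩ := by omega
    have := hinj (G.connectedComponentMk u) hr
    exact congrArg Subtype.val this
  letI : LinearOrder V := LinearOrder.lift' φ hφinj
  have hlt : ∀ u v : V, u < v ↔ φ u < φ v := by
    intro u v
    constructor
    · intro huv
      rcases lt_or_ge (φ u) (φ v) with h' | h'
      · exact h'
      · exfalso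
        have : v ≤ u := h'
        exact absurd (le_antisymm huv.le this) (ne_of_lt huv)
    · intro huv
      rcases lt_trichotomy u v with h' | h' | h'
      · exact h'
      · exact absurd (h' ▸ rfl) (Nat.ne_of_lt huv)
      · exfalso
        have : φ v ≤ φ u := h'.le
        omega
  refine ⟨Fintype.card V, (monoEquivOfFin V rfl).symm.toEquiv, ?_⟩
  rintro ⟨x1, x2, x3, x4, h12, h23, h34, hedges⟩
  -- translate Fin-order to φ-order
  have key_lt : ∀ u v : V, (monoEquivOfFin V rfl).symm.toEquiv u
      < (monoEquivOfFin V rfl).symm.toEquiv v ↔ φ u < φ v := by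
    intro u v
    rw [show ((monoEquivOfFin V rfl).symm.toEquiv u < (monoEquivOfFin V rfl).symm.toEquiv v)
        ↔ u < v from (monoEquivOfFin V rfl).symm.lt_iff_lt]
    exact hlt u v
  rw [key_lt] at h12 h23 h34
  -- adjacency forces same components
  have comp_eq : ∀ u v : V, G.Adj u v → G.connectedComponentMk u = G.connectedComponentMk v :=
    fun u v huv => SimpleGraph.ConnectedComponent.sound huv.reachable
  have mono : ∀ u v : V, φ u < φ v →
      (cEnum (G.connectedComponentMk u)).val ≤ (cEnum (G.connectedComponentMk v)).val := by
    intro u v huv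
    exact aux_le_of_le (hbound _ ⟨v, memself v⟩) huv.le
  have a12 := mono _ _ h12
  have a23 := mono _ _ h23
  have a34 := mono _ _ h34
  -- In both cases, all four vertices are in the same component
  have hcall : G.connectedComponentMk x2 = G.connectedComponentMk x1
      ∧ G.connectedComponentMk x3 = G.connectedComponentMk x1
      ∧ G.connectedComponentMk x4 = G.connectedComponentMk x1 := by
    rcases hedges with ⟨h13, h24⟩ | ⟨h14, h23'⟩
    · have e13 := comp_eq _ _ h13
      have e24 := comp_eq _ _ h24
      have a13 : (cEnum (G.connectedComponentMk x1)).val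
          = (cEnum (G.connectedComponentMk x3)).val := by rw [e13]
      have c2 : G.connectedComponentMk x2 = G.connectedComponentMk x1 := by
        apply cEnum.injective; apply Fin.ext; omega
      refine ⟨c2, e13.symm, ?_⟩
      rw [← e24, c2]
    · have e14 := comp_eq _ _ h14
      have e23 := comp_eq _ _ h23'
      have a14 : (cEnum (G.connectedComponentMk x1)).val
          = (cEnum (G.connectedComponentMk x4)).val := by rw [e14]
      have c2 : G.connectedComponentMk x2 = G.connectedComponentMk x1 := by
        apply cEnum.injective; apply Fin.ext; omega
      have c3 : G.connectedComponentMk x3 = G.connectedComponentMk x1 := by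
        apply cEnum.injective; apply Fin.ext; omega
      exact ⟨c2, c3, e14.symm⟩
  obtain ⟨c2, c3, c4⟩ := hcall
  set c : G.ConnectedComponent := G.connectedComponentMk x1 with hc
  have m1 : x1 ∈ c.supp := memself x1
  have m2 : x2 ∈ c.supp := by rw [SimpleGraph.ConnectedComponent.mem_supp_iff]; exact c2
  have m3 : x3 ∈ c.supp := by rw [SimpleGraph.ConnectedComponent.mem_supp_iff]; exact c3
  have m4 : x4 ∈ c.supp := by rw [SimpleGraph.ConnectedComponent.mem_supp_iff]; exact c4
  have p1 := phi_eq c x1 m1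
  have p2 := phi_eq c x2 m2
  have p3 := phi_eq c x3 m3
  have p4 := phi_eq c x4 m4
  rw [p1, p2] at h12
  rw [p2, p3] at h23
  rw [p3, p4] at h34
  have r12 : ρ c ⟨x1, m1⟩ < ρ c ⟨x2, m2⟩ := by omega
  have r23 : ρ c ⟨x2, m2⟩ < ρ c ⟨x3, m3⟩ := by omega
  have r34 : ρ c ⟨x3, m3⟩ < ρ c ⟨x4, m4⟩ := by omega
  rcases hprop c with hpath | htri
  · rcases hedges with ⟨h13, _⟩ | ⟨h14, _⟩
    · have := hpath ⟨x1, m1⟩ ⟨x3, m3⟩ h13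
      omega
    · have := hpath ⟨x1, m1⟩ ⟨x4, m4⟩ h14
      omega
  · have := htri ⟨x1, m1⟩
    have := htri ⟨x4, m4⟩
    omega
end
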